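/- arXiv:2208.10074 — 6 statements merged into one kernel-verified Lean document; each statement's English description precedes it below -/
import Mathlib

section
/- For any positive integers p, q, n with n ≤ pq + p + q - 1, any n-vertex tree T has a set S of at most p vertices such that each connected component of T − S has at most q vertices. -/
open SimpleGraph

/-- The strong product of two simple graphs. -/
def StrongProd {V W : Type*} (G : SimpleGraph V) (H : SimpleGraph W) : SimpleGraph (V × W) where
  Adj a b := a ≠ b ∧ (a.1 = b.1 ∨ G.Adj a.1 b.1) ∧ (a.2 = b.2 ∨ H.Adj a.2 b.2)
  symm := by
    constructor
    rintro a b ⟨hne, h1, h2⟩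
    exact ⟨hne.symm, h1.imp Eq.symm (fun h => h.symm), h2.imp Eq.symm (fun h => h.symm)⟩
  loopless := by constructor; rintro a ⟨hne, _⟩; exact hne rfl

/-- `G` is isomorphic to a subgraph of `H`. -/
def ContainedIn {V W : Type*} (G : SimpleGraph V) (H : SimpleGraph W) : Prop :=
  ∃ f : V → W, Function.Injective f ∧ ∀ ⦃u v⦄, G.Adj u v → H.Adj (f u) (f v)

/-- Every connected component of `G - S` has at most `q` vertices. -/
def CompsLE {V : Type*} (G : SimpleGraph V) (S : Set V) (q : ℕ) : Prop :=
  ∀ c : (G.induce Sᶜ).ConnectedComponent, Nat.card c.supp ≤ q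

/-- Every connected component of `G - S` has at most `q` vertices (real bound). -/
def CompsLER {V : Type*} (G : SimpleGraph V) (S : Set V) (q : ℝ) : Prop :=
  ∀ c : (G.induce Sᶜ).ConnectedComponent, (Nat.card c.supp : ℝ) ≤ q

/-- `(TG, B)` is a tree-decomposition of `G`: `TG` is a tree, every vertex and
every edge of `G` lies in some bag, and for each vertex the set of nodes whose
bag contains it induces a nonempty connected subgraph of `TG`. -/
def IsTreeDecomp {V T : Type*} (G : SimpleGraph V) (TG : SimpleGraph T) (B : T → Set V) : Prop :=
  TG.IsTree ∧
  (∀ v, ∃ t, v ∈ B t) ∧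
  (∀ ⦃u v⦄, G.Adj u v → ∃ t, u ∈ B t ∧ v ∈ B t) ∧
  (∀ v, (TG.induce {t | v ∈ B t}).Connected)

/-- The tree-width of `G` is at most `k`. -/
def twLE {V : Type*} (G : SimpleGraph V) (k : ℕ) : Prop :=
  ∃ (T : Type) (TG : SimpleGraph T) (B : T → Set V),
    IsTreeDecomp G TG B ∧ ∀ t, Nat.card (B t) ≤ k + 1

/-- A path-decomposition of `G` with `t` bags. -/
def IsPathDecomp {V : Type*} (G : SimpleGraph V) (t : ℕ) (B : Fin t → Set V) : Prop :=
  (∀ v, ∃ i, v ∈ B i) ∧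
  (∀ ⦃u v⦄, G.Adj u v → ∃ i, u ∈ B i ∧ v ∈ B i) ∧
  (∀ i j l : Fin t, i ≤ j → j ≤ l → B i ∩ B l ⊆ B j)

/-- The path-width of `G` is at most `k`. -/
def pwLE {V : Type*} (G : SimpleGraph V) (k : ℕ) : Prop :=
  ∃ (t : ℕ) (B : Fin t → Set V), IsPathDecomp G t B ∧ ∀ i, Nat.card (B i) ≤ k + 1

/-- The tree-depth of `G` is at most `d`: there is a strict forest order (the
strict ancestor relation of a rooted forest) whose comparability graph contains
`G`, with all chains of at most `d` vertices. -/
def tdLE {V : Type*} (G : SimpleGraph V) (d : ℕ) : Prop :=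
  ∃ lt : V → V → Prop,
    Transitive lt ∧
    (∀ u v w, lt u w → lt v w → lt u v ∨ lt v u ∨ u = v) ∧
    (∀ ⦃u v⦄, G.Adj u v → lt u v ∨ lt v u) ∧
    ∃ f : V → Fin d, ∀ u v, lt u v → f u < f v

/-- `P` is an `H`-partition of `G`: the parts partition `V(G)` and every edge of
`G` lies within a part or between parts indexed by adjacent vertices of `H`. -/
def IsHPartition {V W : Type*} (G : SimpleGraph V) (H : SimpleGraph W) (P : W → Set V) : Prop :=
  (∀ v, ∃! x, v ∈ P x) ∧
  ∀ ⦃u v⦄, G.Adj u v → ∀ ⦃x y⦄, u ∈ P x → v ∈ P y → x = y ∨ H.Adj x y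

/-- The tree-partition-width of `G` is at most `m`. -/
def tpwLE {V : Type*} (G : SimpleGraph V) (m : ℕ) : Prop :=
  ∃ (T : Type) (TG : SimpleGraph T) (P : T → Set V),
    TG.IsTree ∧ IsHPartition G TG P ∧ ∀ x, Nat.card (P x) ≤ m

/-- The star with centre `none` and leaves `some i`, `i : ι`. -/
def starGraph (ι : Type*) : SimpleGraph (Option ι) where
  Adj a b := a ≠ b ∧ (a = none ∨ b = none)
  symm := by constructor; rintro a b ⟨hne, h⟩; exact ⟨hne.symm, h.symm⟩
  loopless := by constructor; rintro a ⟨hne, _⟩; exact hne rfl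

/-- A graph class is hereditary if it is closed under induced subgraphs. -/
def Hereditary (𝒢 : ∀ V : Type, SimpleGraph V → Prop) : Prop :=
  ∀ (V : Type) (G : SimpleGraph V), 𝒢 V G → ∀ S : Set V, 𝒢 S (G.induce S)

/-- Every `n`-vertex graph of the class has a balanced separator of size at most
`c * n ^ (1 - ε)`. -/
def SepBound (𝒢 : ∀ V : Type, SimpleGraph V → Prop) (c ε : ℝ) : Prop :=
  ∀ (V : Type) [Fintype V] (G : SimpleGraph V), 𝒢 V G →
    ∃ S : Finset V, (S.card : ℝ) ≤ c * (Fintype.card V : ℝ) ^ (1 - ε) ∧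
      CompsLER G ↑S ((Fintype.card V : ℝ) / 2)

/-- The `k`-th power of the `n`-vertex path. -/
def pathPow (n k : ℕ) : SimpleGraph (Fin n) where
  Adj i j := i ≠ j ∧ (i.val : ℤ) - j.val ≤ k ∧ (j.val : ℤ) - i.val ≤ k
  symm := by constructor; rintro i j ⟨hne, h1, h2⟩; exact ⟨hne.symm, h2, h1⟩
  loopless := by constructor; rintro i ⟨hne, _⟩; exact hne rfl

/-!
Induction on `p`, the case `|V| ≤ q` being trivial. Otherwise walk down the tree: start anywhere,
and while some component of `T - v` below the current vertex `v` has more than `q` vertices, step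
into it, to the unique neighbour of `v` there (unique because `T` is acyclic). The walk stops at a
vertex `v` whose set `D` of descendants, `v` included, has more than `q` vertices while every
component of `T - v` inside `D` has at most `q`. As `(p + 2)(q + 1) - (q + 1) = (p + 1)(q + 1)`,
induction separates the rest `V \ D` with `p` vertices, and `v` separates `D` from it.
-/

namespace SimpleGraph

variable {V : Type*} {G : SimpleGraph V} {s t U D R : Set V} {a b v w x y : V}

/-- The vertex set of the component of `a` in `G[s]`; it is empty when `a ∉ s`. -/
def componentIn (G : SimpleGraph V) (s : Set V) (a : V) : Set V :=
  {x | ∃ p : G.Walk a x, ∀ y ∈ p.support, y ∈ s}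

theorem mem_componentIn_self (ha : a ∈ s) : a ∈ G.componentIn s a :=
  ⟨.nil, by simpa using ha⟩

theorem componentIn_subset : G.componentIn s a ⊆ s :=
  fun _ ⟨p, hp⟩ => hp _ p.end_mem_support

theorem componentIn_mono (hst : s ⊆ t) : G.componentIn s a ⊆ G.componentIn t a :=
  fun _ ⟨p, hp⟩ => ⟨p, fun y hy => hst (hp y hy)⟩

theorem mem_componentIn_comm : b ∈ G.componentIn s a ↔ a ∈ G.componentIn s b := by
  constructor <;> exact fun ⟨p, hp⟩ => ⟨p.reverse, by simpa using hp⟩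

theorem mem_componentIn_trans (hb : b ∈ G.componentIn s a) (hx : x ∈ G.componentIn s b) :
    x ∈ G.componentIn s a := by
  obtain ⟨p, hp⟩ := hb
  obtain ⟨p', hp'⟩ := hx
  refine ⟨p.append p', fun y hy => ?_⟩
  rcases (p.mem_support_append_iff p').1 hy with hy | hy
  exacts [hp y hy, hp' y hy]

theorem mem_componentIn_of_adj (hx : x ∈ G.componentIn s a) (hxy : G.Adj x y) (hy : y ∈ s) :
    y ∈ G.componentIn s a := by
  obtain ⟨p, hp⟩ := hx
  refine ⟨p.concat hxy, fun z hz => ?_⟩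
  rw [Walk.support_concat, List.mem_append, List.mem_singleton] at hz
  rcases hz with hz | rfl
  exacts [hp z hz, hy]

theorem componentIn_subset_of_forall_adj (hb : b ∈ R)
    (hR : ∀ c ∈ R, c ∈ s → ∀ c', G.Adj c c' → c' ∈ s → c' ∈ R) : G.componentIn s b ⊆ R := by
  rintro x ⟨p, hp⟩
  induction p with
  | nil => exact hb
  | cons h p ih =>
    exact ih (hR _ hb (hp _ (by simp)) _ h (hp _ (by simp))) fun y hy => hp y (by simp [hy])

/-- Every vertex met on the way to a vertex of the component lies in the component. -/
theorem componentIn_subset_componentIn (h : G.componentIn s a ⊆ t) :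
    G.componentIn s a ⊆ G.componentIn t a := by
  classical
  rintro x ⟨p, hp⟩
  refine ⟨p, fun y hy => h ⟨p.takeUntil y hy, fun z hz => hp z ?_⟩⟩
  exact p.support_takeUntil_subset_support hy hz

theorem mem_componentIn_of_reachable_induce {a b : s} (h : (G.induce s).Reachable a b) :
    ↑b ∈ G.componentIn s a := by
  obtain ⟨p⟩ := h
  have hp : ∀ y ∈ (p.map (Embedding.induce s).toHom).support, y ∈ s := by
    simp only [Walk.support_map, List.mem_map]
    rintro _ ⟨y, -, rfl⟩
    exact y.2
  exact ⟨_, hp⟩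

theorem _root_.Set.Finite.finite_componentIn (hs : s.Finite) : (G.componentIn s a).Finite :=
  hs.subset componentIn_subset

theorem ncard_componentIn_le (hs : s.Finite) : (G.componentIn s a).ncard ≤ s.ncard :=
  Set.ncard_le_ncard componentIn_subset hs

/-- Two such neighbours, joined inside `s`, would give a walk from `x` to `v` avoiding the edge
`vx`, which is a bridge. -/
theorem IsAcyclic.eq_of_adj_of_mem_componentIn (hG : G.IsAcyclic) (hv : v ∉ s)
    (hxy : y ∈ G.componentIn s x) (hx : G.Adj v x) (hy : G.Adj v y) : x = y := by
  obtain ⟨p, hp⟩ := hxy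
  have hbridge := isAcyclic_iff_forall_adj_isBridge.1 hG hx.symm
  rw [isBridge_iff_forall_walk_mem_edges] at hbridge
  have hedge := hbridge (p.concat hy.symm)
  rw [Walk.edges_concat, List.concat_eq_append, List.mem_append, List.mem_singleton] at hedge
  rcases hedge with hedge | hedge
  · exact absurd (hp v (p.snd_mem_support_of_mem_edges hedge)) hv
  · exact Sym2.congr_left.1 hedge

def IsBranch (G : SimpleGraph V) (U : Set V) (v : V) (D : Set V) : Prop :=
  v ∈ D ∧ D ⊆ U ∧ ∀ a ∈ D, a ≠ v → G.componentIn (U \ {v}) a ⊆ D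

theorem isBranch_self (hv : v ∈ U) : G.IsBranch U v U :=
  ⟨hv, subset_rfl, fun _ _ _ => componentIn_subset.trans Set.sdiff_subset⟩

theorem IsBranch.componentIn_subset_sdiff (hD : G.IsBranch U v D) (haD : a ∉ D) :
    G.componentIn (U \ {v}) a ⊆ U \ D := by
  intro x hx
  have hxv : x ∈ U \ {v} := componentIn_subset hx
  exact ⟨hxv.1, fun hxD => haD (hD.2.2 x hxD hxv.2 (mem_componentIn_comm.1 hx))⟩

/-- The new root is the unique neighbour of `v` in the component (any vertex of it if there is
none). -/
theorem IsBranch.descend (hG : G.IsAcyclic) (hD : G.IsBranch U v D) (ha : a ∈ D) (hav : a ≠ v) :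
    ∃ w, G.IsBranch U w (G.componentIn (U \ {v}) a) := by
  set R := G.componentIn (U \ {v}) a
  have haR : a ∈ R := mem_componentIn_self ⟨hD.2.1 ha, hav⟩
  obtain ⟨w, hwR, hw⟩ : ∃ w ∈ R, ∀ y ∈ R, G.Adj v y → y = w := by
    by_cases h : ∃ y ∈ R, G.Adj v y
    · obtain ⟨y, hyR, hy⟩ := h
      refine ⟨y, hyR, fun z hzR hz => ?_⟩
      refine hG.eq_of_adj_of_mem_componentIn (fun h : v ∈ U \ {v} => h.2 rfl) ?_ hz hy
      exact mem_componentIn_trans (mem_componentIn_comm.1 hzR) hyR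
    · push Not at h
      exact ⟨a, haR, fun y hyR hy => absurd hy (h y hyR)⟩
  refine ⟨w, hwR, componentIn_subset.trans Set.sdiff_subset, fun b hbR _ => ?_⟩
  refine componentIn_subset_of_forall_adj hbR fun c hcR hc c' hcc' hc' => ?_
  have hc'v : c' ≠ v := by
    rintro rfl
    exact hc.2 (hw c hcR hcc'.symm)
  exact mem_componentIn_of_adj hcR hcc' ⟨hc'.1, hc'v⟩

theorem IsBranch.exists_forall_ncard_componentIn_le (hG : G.IsAcyclic) (hU : U.Finite)
    {q : ℕ} (hD : G.IsBranch U v D) (hq : q < D.ncard) :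
    ∃ w R, G.IsBranch U w R ∧ q < R.ncard ∧
      ∀ a ∈ R, a ≠ w → (G.componentIn (U \ {w}) a).ncard ≤ q := by
  induction hn : D.ncard using Nat.strong_induction_on generalizing v D with
  | _ n ih =>
  by_cases hlight : ∀ a ∈ D, a ≠ v → (G.componentIn (U \ {v}) a).ncard ≤ q
  · exact ⟨v, D, hD, hq, hlight⟩
  push Not at hlight
  obtain ⟨a, haD, hav, hheavy⟩ := hlight
  obtain ⟨w, hw⟩ := hD.descend hG haD hav
  have hvR : v ∉ G.componentIn (U \ {v}) a := fun h => (componentIn_subset h).2 rfl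
  have hlt : (G.componentIn (U \ {v}) a).ncard < n :=
    hn ▸ Set.ncard_lt_ncard ⟨hD.2.2 a haD hav, fun h => hvR (h hD.1)⟩ (hU.subset hD.2.1)
  exact ih _ hlt hw hheavy rfl

theorem IsBranch.forall_ncard_componentIn_insert_le {q : ℕ} {S : Set V}
    (hD : G.IsBranch U v D) (hU : U.Finite)
    (hlight : ∀ a ∈ D, a ≠ v → (G.componentIn (U \ {v}) a).ncard ≤ q)
    (hsep : ∀ a ∈ (U \ D) \ S, (G.componentIn ((U \ D) \ S) a).ncard ≤ q) :
    ∀ a ∈ U \ insert v S, (G.componentIn (U \ insert v S) a).ncard ≤ q := by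
  rw [Set.insert_eq, ← Set.sdiff_sdiff]
  intro a ha
  by_cases haD : a ∈ D
  · exact (Set.ncard_le_ncard (componentIn_mono Set.sdiff_subset)
      hU.sdiff.finite_componentIn).trans (hlight a haD ha.1.2)
  · have hsub : G.componentIn ((U \ {v}) \ S) a ⊆ (U \ D) \ S := fun x hx =>
      ⟨hD.componentIn_subset_sdiff haD (componentIn_mono Set.sdiff_subset hx),
        (componentIn_subset hx).2⟩
    exact (Set.ncard_le_ncard (componentIn_subset_componentIn hsub)
      hU.sdiff.sdiff.finite_componentIn).trans (hsep a ⟨⟨ha.1.1, haD⟩, ha.2⟩)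

theorem IsAcyclic.exists_separator (hG : G.IsAcyclic) {p q : ℕ} (hU : U.Finite)
    (hcard : U.ncard < (p + 1) * (q + 1)) :
    ∃ S : Finset V, S.card ≤ p ∧ ∀ a ∈ U \ S, (G.componentIn (U \ S) a).ncard ≤ q := by
  classical
  induction p generalizing U with
  | zero =>
    exact ⟨∅, by simp, fun a _ => by simpa using (ncard_componentIn_le hU).trans (by omega)⟩
  | succ p ih =>
  rcases le_or_gt U.ncard q with hUq | hUq
  · exact ⟨∅, by simp, fun a _ => by simpa using (ncard_componentIn_le hU).trans hUq⟩
  obtain ⟨v₀, hv₀⟩ : U.Nonempty := Set.nonempty_of_ncard_ne_zero (by omega)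
  obtain ⟨v, D, hD, hDq, hlight⟩ :=
    (isBranch_self hv₀).exists_forall_ncard_componentIn_le hG hU hUq
  have hcard' : (U \ D).ncard < (p + 1) * (q + 1) := by
    rw [Set.ncard_sdiff hD.2.1 (hU.subset hD.2.1)]
    have := Set.ncard_le_ncard hD.2.1 hU
    rw [add_mul] at hcard
    omega
  obtain ⟨S, hS, hsep⟩ := ih hU.sdiff hcard'
  refine ⟨insert v S, (Finset.card_insert_le v S).trans (by omega), ?_⟩
  rw [Finset.coe_insert]
  exact hD.forall_ncard_componentIn_insert_le hU hlight hsep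

theorem compsLE_of_forall_ncard_componentIn_le [Finite V] {S : Set V} {q : ℕ}
    (h : ∀ a ∉ S, (G.componentIn Sᶜ a).ncard ≤ q) : CompsLE G S q := by
  intro c
  obtain ⟨a, rfl⟩ := c.exists_rep
  have hsub : Subtype.val '' ((G.induce Sᶜ).connectedComponentMk a).supp ⊆
      G.componentIn Sᶜ a := by
    rintro _ ⟨b, hb, rfl⟩
    exact mem_componentIn_of_reachable_induce (ConnectedComponent.exact hb.symm)
  calc Nat.card ((G.induce Sᶜ).connectedComponentMk a).supp
      = (Subtype.val '' ((G.induce Sᶜ).connectedComponentMk a).supp).ncard := by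
        rw [Set.ncard_image_of_injective _ Subtype.val_injective, Nat.card_coe_set_eq]
    _ ≤ (G.componentIn Sᶜ a).ncard := Set.ncard_le_ncard hsub
    _ ≤ q := h a a.2

end SimpleGraph

theorem tree_separator_general (p q n : ℕ)
    (hnpq : n ≤ p * q + p + q - 1)
    (V : Type) [Fintype V] (hcard : Fintype.card V = n)
    (T : SimpleGraph V) (hT : T.IsTree) :
    ∃ S : Finset V, S.card ≤ p ∧ CompsLE T (↑S) q := by
  have hsize : (Set.univ : Set V).ncard < (p + 1) * (q + 1) := by
    rw [Set.ncard_univ, Nat.card_eq_fintype_card, hcard]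
    have : (p + 1) * (q + 1) = p * q + p + q + 1 := by ring
    omega
  obtain ⟨S, hS, hsep⟩ := hT.isAcyclic.exists_separator Set.finite_univ hsize
  refine ⟨S, hS, compsLE_of_forall_ncard_componentIn_le fun a ha => ?_⟩
  simpa [Set.compl_eq_univ_sdiff] using hsep a ⟨trivial, ha⟩

theorem tree_separator (p q n : ℕ) (hp : 0 < p) (hq : 0 < q) (hn : 0 < n)
    (hnpq : n ≤ p * q + p + q - 1)
    (V : Type) [Fintype V] (hcard : Fintype.card V = n)
    (T : SimpleGraph V) (hT : T.IsTree) :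
    ∃ S : Finset V, S.card ≤ p ∧ CompsLE T (↑S) q :=
  tree_separator_general p q n hnpq V hcard T hT
end

section
/- Let k, n be positive integers and p, q positive reals with n(k+1) ≤ pq and p ≥ k+1. Then any n-vertex graph G with tree-width at most k has a set S of at most p vertices such that each connected component of G − S has at most q vertices. -/
open SimpleGraph

/-!
Root a tree-decomposition of width `k` and, for the current vertex set `R`, take a deepest node `t`
such that more than `q` vertices of `R` have all their bags below `t`. Deleting the bag of `t`
splits these vertices off `R`, and every connected set among them stays below a single child
of `t`, so it has at most `q` vertices. The at most `k + 1` deleted vertices are charged to the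
more than `q` vertices leaving `R`; iterating on the rest of `R`, the `n` vertices pay for at
most `n (k + 1) / q ≤ p` deleted vertices.
-/

namespace SimpleGraph.IsTree

variable {T : Type*} {H : SimpleGraph T} (ht : H.IsTree)

noncomputable def treePath (x y : T) : H.Walk x y :=
  (ht.existsUnique_path x y).exists.choose

lemma isPath_treePath (x y : T) : (ht.treePath x y).IsPath :=
  (ht.existsUnique_path x y).exists.choose_spec

variable {ht}

lemma eq_treePath {x y : T} {p : H.Walk x y} (hp : p.IsPath) : p = ht.treePath x y :=
  (ht.existsUnique_path x y).unique hp (ht.isPath_treePath x y)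

lemma support_treePath_subset {x y : T} (p : H.Walk x y) :
    (ht.treePath x y).support ⊆ p.support := by
  classical
  rw [← eq_treePath p.bypass_isPath]
  exact p.support_bypass_subset_support

lemma reverse_treePath (x y : T) : (ht.treePath x y).reverse = ht.treePath y x :=
  eq_treePath (ht.isPath_treePath x y).reverse

lemma mem_support_treePath_comm {x y z : T} :
    z ∈ (ht.treePath x y).support ↔ z ∈ (ht.treePath y x).support := by
  rw [← reverse_treePath x y, Walk.support_reverse, List.mem_reverse]

lemma treePath_eq_append {x y z : T} (h : z ∈ (ht.treePath x y).support) :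
    ht.treePath x y = (ht.treePath x z).append (ht.treePath z y) := by
  classical
  rw [← Walk.take_spec _ h, eq_treePath ((ht.isPath_treePath x y).takeUntil h),
    eq_treePath ((ht.isPath_treePath x y).dropUntil h)]

lemma treePath_of_adj {x y : T} (h : H.Adj x y) : ht.treePath x y = .cons h .nil :=
  (eq_treePath (Walk.IsPath.nil.cons (by simpa using h.ne))).symm

lemma support_treePath_subset_of_mem {x y a b : T} (ha : a ∈ (ht.treePath x y).support)
    (hb : b ∈ (ht.treePath x y).support) :
    (ht.treePath a b).support ⊆ (ht.treePath x y).support := by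
  have hxy := treePath_eq_append ha
  rw [hxy, Walk.mem_support_append_iff] at hb
  rw [hxy]
  intro z hz
  rw [Walk.mem_support_append_iff]
  rcases hb with hb | hb
  · rw [treePath_eq_append hb, Walk.mem_support_append_iff]
    exact Or.inl (Or.inr (mem_support_treePath_comm.mp hz))
  · rw [treePath_eq_append hb, Walk.mem_support_append_iff]
    exact Or.inr (Or.inl hz)

variable (ht)

-- `s ∈ ht.subtree r t`: the node `s` lies below `t` when the tree is rooted at `r`.
def subtree (r t : T) : Set T := {s | t ∈ (ht.treePath r s).support}

noncomputable def depth (r t : T) : ℕ := (ht.treePath r t).length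

def IsChild (r t c : T) : Prop := H.Adj t c ∧ c ∈ ht.subtree r t

variable {ht} {r : T}

lemma mem_subtree {t s : T} : s ∈ ht.subtree r t ↔ t ∈ (ht.treePath r s).support := Iff.rfl

lemma mem_subtree_root (s : T) : s ∈ ht.subtree r r := Walk.start_mem_support _

lemma depth_add_length {t s : T} (h : s ∈ ht.subtree r t) :
    ht.depth r t + (ht.treePath t s).length = ht.depth r s := by
  rw [depth, depth, treePath_eq_append h, Walk.length_append]

lemma depth_le_of_mem_subtree {t s : T} (h : s ∈ ht.subtree r t) :
    ht.depth r t ≤ ht.depth r s :=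
  (depth_add_length h).symm ▸ Nat.le_add_right _ _

lemma eq_of_mem_subtree_of_depth_le {t s : T} (h : s ∈ ht.subtree r t)
    (hd : ht.depth r s ≤ ht.depth r t) : t = s :=
  Walk.eq_of_length_eq_zero (p := ht.treePath t s) (by have := depth_add_length h; omega)

lemma mem_subtree_or_mem_subtree {t₁ t₂ s : T} (h₁ : s ∈ ht.subtree r t₁)
    (h₂ : s ∈ ht.subtree r t₂) : t₂ ∈ ht.subtree r t₁ ∨ t₁ ∈ ht.subtree r t₂ := by
  have hs := treePath_eq_append h₂
  rw [mem_subtree, hs, Walk.mem_support_append_iff] at h₁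
  refine h₁.imp id fun h => ?_
  have hpath := ht.isPath_treePath r s
  rw [hs, treePath_eq_append h, Walk.append_assoc] at hpath
  rw [mem_subtree, ← eq_treePath hpath.of_append_left]
  exact (Walk.mem_support_append_iff _ _).mpr (Or.inl (Walk.end_mem_support _))

lemma mem_support_treePath_of_mem_subtree {t a b : T} (ha : a ∈ ht.subtree r t)
    (hb : b ∉ ht.subtree r t) : t ∈ (ht.treePath a b).support := by
  have h := support_treePath_subset ((ht.treePath r b).append (ht.treePath b a)) ha
  rw [Walk.mem_support_append_iff] at h
  exact mem_support_treePath_comm.mp (h.resolve_left hb)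

lemma IsChild.depth_eq {t c : T} (h : ht.IsChild r t c) : ht.depth r c = ht.depth r t + 1 := by
  rw [← depth_add_length h.2, treePath_of_adj h.1, Walk.length_cons, Walk.length_nil]

lemma IsChild.eq_of_mem_subtree {t c₁ c₂ s : T} (h₁ : ht.IsChild r t c₁)
    (h₂ : ht.IsChild r t c₂) (hs₁ : s ∈ ht.subtree r c₁) (hs₂ : s ∈ ht.subtree r c₂) :
    c₁ = c₂ := by
  have hd : ht.depth r c₁ = ht.depth r c₂ := by rw [h₁.depth_eq, h₂.depth_eq]
  rcases mem_subtree_or_mem_subtree hs₁ hs₂ with h | h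
  · exact eq_of_mem_subtree_of_depth_le h hd.ge
  · exact (eq_of_mem_subtree_of_depth_le h hd.le).symm

lemma exists_isChild {t s : T} (h : s ∈ ht.subtree r t) (hne : s ≠ t) :
    ∃ c, ht.IsChild r t c ∧ s ∈ ht.subtree r c := by
  obtain ⟨c, hadj, p, hp⟩ := Walk.exists_eq_cons_of_ne hne.symm (ht.treePath t s)
  have hpath := ht.isPath_treePath r s
  rw [treePath_eq_append h, hp, ← Walk.concat_append] at hpath
  have hc := eq_treePath (ht := ht) hpath.of_append_left
  refine ⟨c, ⟨hadj, ?_⟩, ?_⟩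
  · rw [mem_subtree, ← hc, Walk.support_concat]
    simp
  · rw [mem_subtree, treePath_eq_append h, hp]
    simp

lemma IsChild.mem_support_treePath {t c₁ c₂ s₁ s₂ : T} (h₁ : ht.IsChild r t c₁)
    (h₂ : ht.IsChild r t c₂) (hne : c₁ ≠ c₂) (hs₁ : s₁ ∈ ht.subtree r c₁)
    (hs₂ : s₂ ∈ ht.subtree r c₂) : t ∈ (ht.treePath s₁ s₂).support := by
  have hc₁ : c₁ ∈ (ht.treePath s₁ s₂).support :=
    mem_support_treePath_of_mem_subtree hs₁ fun h => hne (h₁.eq_of_mem_subtree h₂ h hs₂)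
  have hc₂ : c₂ ∈ (ht.treePath s₁ s₂).support := mem_support_treePath_comm.mp
    (mem_support_treePath_of_mem_subtree hs₂ fun h => hne (h₁.eq_of_mem_subtree h₂ hs₁ h))
  have hpath : (Walk.cons h₁.1.symm (.cons h₂.1 .nil)).IsPath := by
    simp [h₁.1.ne', h₂.1.ne, hne]
  apply support_treePath_subset_of_mem hc₁ hc₂
  rw [← eq_treePath hpath]
  simp

end SimpleGraph.IsTree

namespace IsTreeDecomp

variable {V T : Type*} {G : SimpleGraph V} {H : SimpleGraph T} {B : T → Set V}

lemma mem_of_mem_support_treePath (hB : IsTreeDecomp G H B) {v : V} {x y z : T}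
    (hx : v ∈ B x) (hy : v ∈ B y) (hz : z ∈ (hB.1.treePath x y).support) : v ∈ B z := by
  obtain ⟨p⟩ := (hB.2.2.2 v).preconnected ⟨x, hx⟩ ⟨y, hy⟩
  have h := IsTree.support_treePath_subset (p.map (Embedding.induce _).toHom) hz
  rw [Walk.support_map, List.mem_map] at h
  obtain ⟨z', -, rfl⟩ := h
  exact z'.2

def vertsBelow (hB : IsTreeDecomp G H B) (r t : T) : Set V :=
  {v | ∀ s, v ∈ B s → s ∈ hB.1.subtree r t}

variable (hB : IsTreeDecomp G H B) {r t c : T} {u v : V}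

lemma mem_vertsBelow_root (v : V) : v ∈ hB.vertsBelow r r :=
  fun s _ => IsTree.mem_subtree_root s

lemma mem_vertsBelow_of_adj (hu : u ∈ hB.vertsBelow r t) (huv : G.Adj u v) (hvt : v ∉ B t) :
    v ∈ hB.vertsBelow r t := by
  obtain ⟨s, hus, hvs⟩ := hB.2.2.1 huv
  intro s' hvs'
  by_contra h
  exact hvt (hB.mem_of_mem_support_treePath hvs hvs'
    (IsTree.mem_support_treePath_of_mem_subtree (hu s hus) h))

lemma exists_isChild_of_mem_vertsBelow (hu : u ∈ hB.vertsBelow r t) (hut : u ∉ B t) :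
    ∃ c, hB.1.IsChild r t c ∧ u ∈ hB.vertsBelow r c := by
  have hne : ∀ s, u ∈ B s → s ≠ t := fun s hs h => hut (h ▸ hs)
  obtain ⟨s₀, hs₀⟩ := hB.2.1 u
  obtain ⟨c, hc, hs₀c⟩ := IsTree.exists_isChild (hu s₀ hs₀) (hne s₀ hs₀)
  refine ⟨c, hc, fun s hs => ?_⟩
  obtain ⟨c', hc', hsc'⟩ := IsTree.exists_isChild (hu s hs) (hne s hs)
  by_cases hcc : c = c'
  · exact hcc ▸ hsc'
  · exact absurd (hB.mem_of_mem_support_treePath hs₀ hs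
      (hc.mem_support_treePath hc' hcc hs₀c hsc')) hut

lemma mem_vertsBelow_of_isChild_of_adj (hc : hB.1.IsChild r t c) (hu : u ∈ hB.vertsBelow r c)
    (huv : G.Adj u v) (hv : v ∈ hB.vertsBelow r t) (hvt : v ∉ B t) : v ∈ hB.vertsBelow r c := by
  obtain ⟨c', hc', hvc'⟩ := hB.exists_isChild_of_mem_vertsBelow hv hvt
  obtain ⟨s, hus, hvs⟩ := hB.2.2.1 huv
  rwa [hc.eq_of_mem_subtree hc' (hu s hus) (hvc' s hvs)]

end IsTreeDecomp

section ConnectedSets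

variable {V : Type*} {G : SimpleGraph V}

lemma eq_of_induce_connected {ι : Sort*} {C : Set V} (hC : (G.induce C).Connected) {f : V → ι}
    (hf : ∀ u ∈ C, ∀ v ∈ C, G.Adj u v → f u = f v) {u v : V} (hu : u ∈ C) (hv : v ∈ C) :
    f u = f v := by
  suffices ∀ a b : C, (G.induce C).Walk a b → f a = f b from
    this ⟨u, hu⟩ ⟨v, hv⟩ (hC.preconnected _ _).some
  intro a b p
  induction p with
  | nil => rfl
  | cons h _ ih => exact (hf _ (Subtype.prop _) _ (Subtype.prop _) h).trans ih

def ConnectedSetsLE (G : SimpleGraph V) (W : Set V) (q : ℝ) : Prop :=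
  ∀ C ⊆ W, (G.induce C).Connected → (C.ncard : ℝ) ≤ q

variable {W W' A A' : Set V} {q : ℝ}

lemma ConnectedSetsLE.mono (h : ConnectedSetsLE G W q) (hW : W' ⊆ W) :
    ConnectedSetsLE G W' q :=
  fun C hC => h C (hC.trans hW)

lemma connectedSetsLE_of_ncard_le [Finite V] (h : (W.ncard : ℝ) ≤ q) :
    ConnectedSetsLE G W q :=
  fun _ hC _ => le_trans (by exact_mod_cast Set.ncard_le_ncard hC) h

lemma connectedSetsLE_of_forall_exists [Finite V]
    (h : ∀ u ∈ W, ∃ Y : Set V, u ∈ Y ∧ (Y.ncard : ℝ) ≤ q ∧ ∀ v ∈ Y, ∀ w ∈ W, G.Adj v w → w ∈ Y) :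
    ConnectedSetsLE G W q := by
  intro C hCW hC
  obtain ⟨⟨u, hu⟩⟩ := hC.nonempty
  obtain ⟨Y, huY, hY, hYW⟩ := h u (hCW hu)
  have hCY : C ⊆ Y := fun v hv =>
    (eq_of_induce_connected hC (f := (· ∈ Y)) (fun a ha b hb hab => propext
      ⟨fun haY => hYW a haY b (hCW hb) hab, fun hbY => hYW b hbY a (hCW ha) hab.symm⟩) hu hv) ▸ huY
  exact le_trans (by exact_mod_cast Set.ncard_le_ncard hCY) hY

lemma ConnectedSetsLE.union (hA : ConnectedSetsLE G A q) (hA' : ConnectedSetsLE G A' q)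
    (hAA' : ∀ u ∈ A, ∀ v ∈ A', ¬ G.Adj u v) : ConnectedSetsLE G (A ∪ A') q := by
  intro C hC hconn
  obtain ⟨⟨u, hu⟩⟩ := hconn.nonempty
  have hconst : ∀ v ∈ C, (u ∈ A) = (v ∈ A) := fun v hv =>
    eq_of_induce_connected hconn (f := (· ∈ A)) (fun a ha b hb hab => propext
      ⟨fun haA => by_contra fun hbA => hAA' a haA b ((hC hb).resolve_left hbA) hab,
       fun hbA => by_contra fun haA => hAA' b hbA a ((hC ha).resolve_left haA) hab.symm⟩) hu hv
  by_cases huA : u ∈ A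
  · exact hA C (fun v hv => hconst v hv ▸ huA) hconn
  · exact hA' C (fun v hv => (hC hv).resolve_left (hconst v hv ▸ huA)) hconn

lemma compsLER_of_connectedSetsLE {S : Set V} (h : ConnectedSetsLE G Sᶜ q) : CompsLER G S q := by
  classical
  intro c
  rw [Nat.card_coe_set_eq, ← Set.ncard_image_of_injective _ Subtype.val_injective]
  refine h _ (by rintro _ ⟨v, -, rfl⟩; exact v.2) ?_
  obtain ⟨v₀, rfl⟩ := c.exists_rep
  refine induce_connected_of_patches v₀.1 ⟨v₀, rfl, rfl⟩ fun {x} hx => ?_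
  obtain ⟨v, hv, rfl⟩ := hx
  obtain ⟨p⟩ := (ConnectedComponent.exact hv).symm
  refine ⟨_, subset_rfl, _, _, ⟨(p.map (Embedding.induce Sᶜ).toHom).induce _ ?_⟩⟩
  intro x hx
  rw [Walk.support_map, List.mem_map] at hx
  obtain ⟨y, hy, rfl⟩ := hx
  exact ⟨y, ConnectedComponent.sound ⟨(p.takeUntil y hy).reverse⟩, rfl⟩

end ConnectedSets

section Separator

variable {V : Type*} {G : SimpleGraph V}

structure IsSplit (G : SimpleGraph V) (b : ℕ) (q : ℝ) (R X A : Set V) : Prop where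
  sep_subset : X ⊆ R
  part_subset : A ⊆ R
  ncard_sep_le : X.ncard ≤ b
  lt_ncard_union : q < (A ∪ X).ncard
  connectedSetsLE_part : ConnectedSetsLE G A q
  not_adj : ∀ u ∈ A, ∀ v ∈ R \ (A ∪ X), ¬ G.Adj u v

theorem exists_sdiff_connectedSetsLE_of_isSplit [Finite V] {b : ℕ} {q : ℝ} (hq : 0 < q)
    (hsplit : ∀ R : Set V, q < R.ncard → ∃ X A, IsSplit G b q R X A) (R : Set V) (p : ℝ)
    (hR : (R.ncard : ℝ) * b ≤ p * q) :
    ∃ S ⊆ R, (S.ncard : ℝ) ≤ p ∧ ConnectedSetsLE G (R \ S) q := by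
  induction hn : R.ncard using Nat.strong_induction_on generalizing R p with
  | _ n ih =>
    subst hn
    by_cases hsmall : (R.ncard : ℝ) ≤ q
    · have hp : 0 ≤ p := nonneg_of_mul_nonneg_left (le_trans (by positivity) hR) hq
      exact ⟨∅, Set.empty_subset _, by simpa using hp,
        connectedSetsLE_of_ncard_le (by simpa using hsmall)⟩
    obtain ⟨X, A, hs⟩ := hsplit R (not_le.mp hsmall)
    have hcard : (R \ (A ∪ X)).ncard + (A ∪ X).ncard = R.ncard :=
      Set.ncard_sdiff_add_ncard_of_subset (Set.union_subset hs.part_subset hs.sep_subset)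
    have hlt : (R \ (A ∪ X)).ncard < R.ncard := by
      have : 0 < (A ∪ X).ncard := by exact_mod_cast hq.trans hs.lt_ncard_union
      omega
    -- the separator `X` is paid for by the more than `q` vertices of `A ∪ X` leaving `R`
    have hbudget : ((R \ (A ∪ X)).ncard : ℝ) * b ≤ (p - X.ncard) * q := by
      have hX : (X.ncard : ℝ) ≤ b := by exact_mod_cast hs.ncard_sep_le
      have hcard' : ((R \ (A ∪ X)).ncard : ℝ) + (A ∪ X).ncard = R.ncard := by exact_mod_cast hcard
      nlinarith [mul_nonneg (sub_nonneg.2 hX) hq.le,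
        mul_nonneg (Nat.cast_nonneg (α := ℝ) b) (sub_nonneg.2 hs.lt_ncard_union.le)]
    obtain ⟨S', hS'R, hS'p, hS'⟩ := ih _ hlt _ _ hbudget rfl
    refine ⟨X ∪ S', Set.union_subset hs.sep_subset (hS'R.trans Set.sdiff_subset), ?_, ?_⟩
    · calc ((X ∪ S').ncard : ℝ) ≤ X.ncard + S'.ncard := by exact_mod_cast Set.ncard_union_le X S'
        _ ≤ p := by linarith
    · refine (hs.connectedSetsLE_part.union hS' fun u hu v hv => hs.not_adj u hu v hv.1).mono ?_
      rintro v ⟨hvR, hvXS⟩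
      by_cases hvA : v ∈ A
      · exact Or.inl hvA
      · exact Or.inr ⟨⟨hvR, fun h => h.elim hvA fun hX => hvXS (Or.inl hX)⟩,
          fun h => hvXS (Or.inr h)⟩

variable {T : Type*} {H : SimpleGraph T} {B : T → Set V}

theorem IsTreeDecomp.exists_maximal_depth_lt_ncard [Finite V] (hB : IsTreeDecomp G H B)
    (r : T) {q : ℝ} (hq : 0 ≤ q) {R : Set V} (hR : q < R.ncard) :
    ∃ t, q < (R ∩ hB.vertsBelow r t).ncard ∧
      ∀ s, q < (R ∩ hB.vertsBelow r s).ncard → hB.1.depth r s ≤ hB.1.depth r t := by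
  set cand := {t | q < (R ∩ hB.vertsBelow r t).ncard}
  obtain ⟨_, ⟨t, htc, rfl⟩, hmax⟩ : ∃ d, IsGreatest (hB.1.depth r '' cand) d := by
    refine BddAbove.exists_isGreatest_of_nonempty ?_ ⟨_, r, ?_, rfl⟩
    · choose bag hbag using hB.2.1
      obtain ⟨b, hb⟩ := (Set.finite_range fun v => hB.1.depth r (bag v)).bddAbove
      refine ⟨b, ?_⟩
      rintro _ ⟨t, htc, rfl⟩
      obtain ⟨v, hv⟩ : (R ∩ hB.vertsBelow r t).Nonempty :=
        Set.nonempty_of_ncard_ne_zero (by exact_mod_cast (hq.trans_lt htc).ne')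
      exact (IsTree.depth_le_of_mem_subtree (hv.2 _ (hbag v))).trans (hb ⟨v, rfl⟩)
    · simpa [cand, Set.inter_eq_left.mpr fun v _ => hB.mem_vertsBelow_root (r := r) v] using hR
  exact ⟨t, htc, fun s hs => hmax ⟨s, hs, rfl⟩⟩

theorem IsTreeDecomp.exists_isSplit [Finite V] (hB : IsTreeDecomp G H B) {k : ℕ}
    (hk : ∀ t, Nat.card (B t) ≤ k + 1) {q : ℝ} (hq : 0 ≤ q) {R : Set V} (hR : q < R.ncard) :
    ∃ X A, IsSplit G (k + 1) q R X A := by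
  obtain ⟨r⟩ := hB.1.connected.nonempty
  -- a deepest node with more than `q` vertices of `R` below it: each child has at most `q`
  obtain ⟨t, htR, hmax⟩ := hB.exists_maximal_depth_lt_ncard r hq hR
  refine ⟨B t ∩ R, (R ∩ hB.vertsBelow r t) \ B t,
    { sep_subset := Set.inter_subset_right
      part_subset := fun v hv => hv.1.1
      ncard_sep_le := ?_
      lt_ncard_union := ?_
      connectedSetsLE_part := ?_
      not_adj := ?_ }⟩
  · exact (Set.ncard_le_ncard Set.inter_subset_left).trans ((Nat.card_coe_set_eq _).symm ▸ hk t)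
  · have hsub : R ∩ hB.vertsBelow r t ⊆ (R ∩ hB.vertsBelow r t) \ B t ∪ B t ∩ R :=
      fun v hv => by
        by_cases hvt : v ∈ B t
        · exact Or.inr ⟨hvt, hv.1⟩
        · exact Or.inl ⟨hv, hvt⟩
    exact htR.trans_le (by exact_mod_cast Set.ncard_le_ncard hsub)
  · refine connectedSetsLE_of_forall_exists fun u hu => ?_
    obtain ⟨c, hc, huc⟩ := hB.exists_isChild_of_mem_vertsBelow hu.1.2 hu.2
    refine ⟨R ∩ hB.vertsBelow r c, ⟨hu.1.1, huc⟩, ?_, fun v hv w hw hvw =>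
      ⟨hw.1.1, hB.mem_vertsBelow_of_isChild_of_adj hc hv.2 hvw hw.1.2 hw.2⟩⟩
    by_contra hcq
    have := hmax c (not_le.mp hcq)
    rw [hc.depth_eq] at this
    omega
  · rintro u hu v ⟨hvR, hvAX⟩ huv
    have hvt : v ∉ B t := fun h => hvAX (Or.inr ⟨h, hvR⟩)
    exact hvAX (Or.inl ⟨⟨hvR, hB.mem_vertsBelow_of_adj hu.1.2 huv hvt⟩, hvt⟩)

end Separator

theorem treewidth_separator_real_general (k n : ℕ)
    (p q : ℝ) (hq : 0 < q)
    (hineq : (n : ℝ) * (k + 1) ≤ p * q)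
    (V : Type) [Fintype V] (hcard : Fintype.card V = n)
    (G : SimpleGraph V) (htw : twLE G k) :
    ∃ S : Finset V, (S.card : ℝ) ≤ p ∧ CompsLER G (↑S) q := by
  obtain ⟨T, H, B, hB, hk⟩ := htw
  obtain ⟨S, -, hSp, hS⟩ := exists_sdiff_connectedSetsLE_of_isSplit hq
    (fun R hR => hB.exists_isSplit hk hq.le hR) Set.univ p (by simpa [hcard] using hineq)
  refine ⟨S.toFinite.toFinset, by rwa [← Set.ncard_eq_toFinset_card], ?_⟩
  refine compsLER_of_connectedSetsLE ?_
  simpa [Set.compl_eq_univ_sdiff] using hS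

theorem treewidth_separator_real (k n : ℕ) (hk : 0 < k) (hn0 : 0 < n)
    (p q : ℝ) (hp : 0 < p) (hq : 0 < q)
    (hineq : (n : ℝ) * (k + 1) ≤ p * q) (hpk : (k : ℝ) + 1 ≤ p)
    (V : Type) [Fintype V] (hcard : Fintype.card V = n)
    (G : SimpleGraph V) (htw : twLE G k) :
    ∃ S : Finset V, (S.card : ℝ) ≤ p ∧ CompsLER G (↑S) q :=
  treewidth_separator_real_general k n p q hq hineq V hcard G htw
end

section
/- For every graph G, tw(G) ≤ 2·tpw(G) − 1, where tpw(G) is the tree-partition-width: the minimum m such that G has a T-partition of width m for some tree T (a partition of V(G) indexed by the vertices of a tree T with parts of size at most m such that edges of G go within parts or between parts indexed by adjacent tree vertices). -/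
/-!
Root the tree `T` at some node `r` and give node `t` the bag `P t ∪ P (parent t)`. Every edge of
a tree joins a node to its parent, so every edge of `G` lies in a bag, and the nodes whose bag
contains a vertex `v ∈ P x` are `x` and its children, which form a star. Each bag is the union of
two parts, hence has at most `2m` vertices.
-/

open SimpleGraph

namespace SimpleGraph.IsTree

variable {T : Type*} {TG : SimpleGraph T} (hT : TG.IsTree) (r : T)

noncomputable def pathToRoot (t : T) : TG.Walk t r :=
  (hT.existsUnique_path t r).exists.choose

noncomputable def parent (t : T) : T :=
  (hT.pathToRoot r t).snd

lemma isPath_pathToRoot (t : T) : (hT.pathToRoot r t).IsPath :=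
  (hT.existsUnique_path t r).exists.choose_spec

lemma pathToRoot_root : hT.pathToRoot r r = Walk.nil :=
  (hT.existsUnique_path r r).unique (hT.isPath_pathToRoot r r) Walk.IsPath.nil

lemma parent_root : hT.parent r r = r := by
  simp [parent, pathToRoot_root]

lemma adj_parent {t : T} (ht : t ≠ r) : TG.Adj t (hT.parent r t) :=
  Walk.adj_snd (Walk.not_nil_of_ne ht)

lemma eq_parent_of_adj_of_mem_support {x y : T} (hxy : TG.Adj x y)
    (hy : y ∈ (hT.pathToRoot r x).support) : y = hT.parent r x :=
  hT.isAcyclic.eq_snd_of_adj_start (hT.isPath_pathToRoot r x) hxy hy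

lemma parent_eq_or_parent_eq_of_adj {x y : T} (hxy : TG.Adj x y) :
    hT.parent r x = y ∨ hT.parent r y = x := by
  by_cases hy : y ∈ (hT.pathToRoot r x).support
  · exact Or.inl (hT.eq_parent_of_adj_of_mem_support r hxy hy).symm
  · right
    refine (hT.eq_parent_of_adj_of_mem_support r hxy.symm ?_).symm
    have hx := hT.isAcyclic.mem_support_of_ne_mem_support_of_adj_of_isPath
      (hT.isPath_pathToRoot r y).reverse (hT.isPath_pathToRoot r x).reverse hxy.symm
      (by simpa using hy)
    simpa using hx

lemma connected_induce_eq_or_parent_eq (x : T) :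
    (TG.induce {t | t = x ∨ hT.parent r t = x}).Connected := by
  have hx : x ∈ {t | t = x ∨ hT.parent r t = x} := Or.inl rfl
  have reach_x : ∀ t : {t | t = x ∨ hT.parent r t = x},
      (TG.induce {t | t = x ∨ hT.parent r t = x}).Reachable t ⟨x, hx⟩ := by
    rintro ⟨t, rfl | hpt⟩
    · rfl
    by_cases htx : t = x
    · subst htx; rfl
    have htr : t ≠ r := by
      intro htr
      rw [htr, hT.parent_root] at hpt
      exact htx (htr.trans hpt)
    exact Adj.reachable (by simpa [hpt] using hT.adj_parent r htr)
  have : Nonempty {t | t = x ∨ hT.parent r t = x} := ⟨⟨x, hx⟩⟩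
  exact ⟨fun a b => (reach_x a).trans (reach_x b).symm⟩

end SimpleGraph.IsTree

lemma IsHPartition.isTreeDecomp_union_parent {V T : Type*} {G : SimpleGraph V}
    {TG : SimpleGraph T} {P : T → Set V} (hT : TG.IsTree) (hP : IsHPartition G TG P) (r : T) :
    IsTreeDecomp G TG (fun t => P t ∪ P (hT.parent r t)) := by
  obtain ⟨hpart, hedge⟩ := hP
  refine ⟨hT, fun v => ?_, fun u v huv => ?_, fun v => ?_⟩
  · obtain ⟨x, hx, -⟩ := hpart v
    exact ⟨x, Or.inl hx⟩
  · obtain ⟨x, hx, -⟩ := hpart u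
    obtain ⟨y, hy, -⟩ := hpart v
    rcases hedge huv hx hy with rfl | hxy
    · exact ⟨x, Or.inl hx, Or.inl hy⟩
    rcases hT.parent_eq_or_parent_eq_of_adj r hxy with hpx | hpy
    · exact ⟨x, Or.inl hx, Or.inr (hpx ▸ hy)⟩
    · exact ⟨y, Or.inr (hpy ▸ hx), Or.inl hy⟩
  · obtain ⟨x, hx, hxu⟩ := hpart v
    have hbags : {t | v ∈ P t ∪ P (hT.parent r t)} = {t | t = x ∨ hT.parent r t = x} := by
      ext t
      refine ⟨Or.imp (hxu t) (hxu _), ?_⟩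
      rintro (rfl | hpt)
      · exact Or.inl hx
      · exact Or.inr (hpt ▸ hx)
    rw [hbags]
    exact hT.connected_induce_eq_or_parent_eq r x

theorem tw_le_two_tpw_sub_one_general (V : Type) (G : SimpleGraph V) (m : ℕ)
    (h : tpwLE G m) : twLE G (2 * m - 1) := by
  obtain ⟨T, TG, P, hT, hP, hsize⟩ := h
  obtain ⟨r⟩ := hT.connected.nonempty
  refine ⟨T, TG, fun t => P t ∪ P (hT.parent r t), hP.isTreeDecomp_union_parent hT r, fun t => ?_⟩
  have hunion := Set.ncard_union_le (P t) (P (hT.parent r t))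
  have ht := hsize t
  have hpt := hsize (hT.parent r t)
  simp only [Nat.card_coe_set_eq] at hunion ht hpt ⊢
  omega

theorem tw_le_two_tpw_sub_one (V : Type) (G : SimpleGraph V) (m : ℕ) (hm : 0 < m)
    (h : tpwLE G m) : twLE G (2 * m - 1) :=
  tw_le_two_tpw_sub_one_general V G m h
end

section
/- Let G be a hereditary graph class with sep ≤ c·n^(1−ε) for constants c > 0, ε ∈ (0,1). Then for every positive integer d, every n-vertex G ∈ G is a subgraph of H ⊠ K_m for some graph H with tree-depth at most d, where m ≤ (c·2^ε/(2^ε − 1))·n^((1−ε)/(1−ε^d)). -/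
open SimpleGraph

/-!
Separating a graph of the class recursively, each piece by a balanced separator, until all
pieces have at most `s` vertices removes at most `C·N·s^(-ε)` of its `N` vertices, where
`C = c·2^ε/(2^ε - 1) = c·∑ⱼ 2^(-jε)`: the separators of a level whose pieces have about
`M ≥ s` vertices cost `c·N·M^(-ε)` in total, a geometric series dominated by the deepest level.
With `δ_d = (1-ε)/(1-ε^d)` and `s = N^(δ_{d+1}/δ_d)`, the removed set has at most
`C·N^δ_{d+1}` vertices and becomes one part, the apex of `H`; every remaining piece has at most
`s` vertices and, by induction on `d`, an `H_K`-partition with `td H_K ≤ d` and parts of at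
most `C·s^δ_d = C·N^δ_{d+1}` vertices. The cone over the disjoint union of the `H_K` has
tree-depth at most `d + 1`, and a graph with an `H`-partition into parts of at most `m`
vertices is a subgraph of `H ⊠ K_m`.
-/

open Finset

theorem tdLE_bot {U : Type*} {d : ℕ} (hd : 0 < d) : tdLE (⊥ : SimpleGraph U) d :=
  ⟨fun _ _ => False, fun _ _ _ h => h.elim, fun _ _ _ h => h.elim, fun _ _ h => h.elim,
    fun _ => ⟨0, hd⟩, fun _ _ h => h.elim⟩

section SigmaGraph

variable {ι : Type*} {W : ι → Type*}

def sigmaGraph (H : ∀ i, SimpleGraph (W i)) : SimpleGraph (Σ i, W i) :=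
  ⨆ i, (H i).map (Function.Embedding.sigmaMk i)

theorem sigmaGraph_adj {H : ∀ i, SimpleGraph (W i)} {x y : Σ i, W i} :
    (sigmaGraph H).Adj x y ↔ ∃ i a b, (H i).Adj a b ∧ ⟨i, a⟩ = x ∧ ⟨i, b⟩ = y := by
  simp [sigmaGraph]

theorem sigmaGraph_adj_mk {H : ∀ i, SimpleGraph (W i)} {i : ι} {a b : W i} :
    (sigmaGraph H).Adj ⟨i, a⟩ ⟨i, b⟩ ↔ (H i).Adj a b := by
  refine sigmaGraph_adj.trans ⟨?_, fun h => ⟨i, a, b, h, rfl, rfl⟩⟩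
  rintro ⟨j, a', b', h, ⟨⟩, ⟨⟩⟩
  exact h

theorem tdLE_sigmaGraph {H : ∀ i, SimpleGraph (W i)} {d : ℕ} (h : ∀ i, tdLE (H i) d) :
    tdLE (sigmaGraph H) d := by
  choose lt htrans hdown hadj f hf using h
  refine ⟨Sigma.Lex (fun _ _ => False) lt, ?_, ?_, ?_, fun x => f x.1 x.2, ?_⟩
  · rintro _ _ _ (⟨_, _, ⟨⟩⟩ | ⟨a, b, hab⟩) (⟨_, _, ⟨⟩⟩ | ⟨_, c, hbc⟩)
    exact .right _ _ (htrans _ hab hbc)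
  · rintro _ _ _ (⟨_, _, ⟨⟩⟩ | ⟨a, c, hac⟩) (⟨_, _, ⟨⟩⟩ | ⟨b, _, hbc⟩)
    rcases hdown _ a b c hac hbc with h | h | rfl
    · exact Or.inl (.right _ _ h)
    · exact Or.inr (Or.inl (.right _ _ h))
    · exact Or.inr (Or.inr rfl)
  · intro x y hxy
    obtain ⟨i, a, b, hab, rfl, rfl⟩ := sigmaGraph_adj.1 hxy
    exact (hadj i hab).imp (.right _ _) (.right _ _)
  · rintro _ _ (⟨_, _, ⟨⟩⟩ | ⟨a, b, hab⟩)
    exact hf _ _ _ hab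

end SigmaGraph

section ConeGraph

variable {U : Type*}

def coneGraph (H : SimpleGraph U) : SimpleGraph (Option U) :=
  _root_.starGraph U ⊔ H.map Function.Embedding.some

def coneRel (lt : U → U → Prop) : Option U → Option U → Prop
  | none, none => False
  | none, some _ => True
  | some _, none => False
  | some a, some b => lt a b

variable {H : SimpleGraph U}

theorem coneGraph_adj_none_some (a : U) : (coneGraph H).Adj none (some a) :=
  Or.inl ⟨by simp, Or.inl rfl⟩

theorem coneGraph_adj_some {a b : U} : (coneGraph H).Adj (some a) (some b) ↔ H.Adj a b := by
  refine ⟨?_, fun h => Or.inr ((map_adj_apply (f := Function.Embedding.some)).2 h)⟩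
  rintro (⟨-, h | h⟩ | h)
  · cases h
  · cases h
  · exact (map_adj_apply (f := Function.Embedding.some)).1 h

theorem tdLE_coneGraph {d : ℕ} (h : tdLE H d) : tdLE (coneGraph H) (d + 1) := by
  obtain ⟨lt, htrans, hdown, hadj, f, hf⟩ := h
  refine ⟨coneRel lt, ?_, ?_, ?_, fun x => x.elim 0 fun a => (f a).succ, ?_⟩
  · rintro (_ | a) (_ | b) (_ | c) hab hbc <;> simp only [coneRel] at hab hbc ⊢
    exact htrans hab hbc
  · rintro (_ | a) (_ | b) (_ | c) hac hbc <;>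
      simp only [coneRel, true_or, or_true, Option.some.injEq] at hac hbc ⊢
    exact hdown a b c hac hbc
  · rintro (_ | a) (_ | b) hab
    · exact ((coneGraph H).loopless.irrefl _ hab).elim
    · exact Or.inl trivial
    · exact Or.inr trivial
    · exact hadj (coneGraph_adj_some.1 hab)
  · rintro (_ | a) (_ | b) hab <;> simp_all [coneRel, Fin.succ_pos]

end ConeGraph

section Pieces

variable {V : Type*} {G : SimpleGraph V}

open Classical in
/-- The vertex set of the component of `G[A]` containing `v`; empty if `v ∉ A`. -/
noncomputable def piece (G : SimpleGraph V) (A : Finset V) (v : V) : Finset V :=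
  {w ∈ A | ∃ p : G.Walk v w, ∀ x ∈ p.support, x ∈ A}

variable {A B : Finset V} {u v w : V}

theorem mem_piece : w ∈ piece G A v ↔ ∃ p : G.Walk v w, ∀ x ∈ p.support, x ∈ A := by
  simp only [piece, mem_filter]
  exact ⟨And.right, fun ⟨p, hp⟩ => ⟨hp w p.end_mem_support, p, hp⟩⟩

theorem piece_subset : piece G A v ⊆ A := fun w hw => by
  obtain ⟨p, hp⟩ := mem_piece.1 hw
  exact hp w p.end_mem_support

theorem mem_piece_self (hv : v ∈ A) : v ∈ piece G A v :=
  mem_piece.2 ⟨.nil, by simpa⟩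

theorem piece_mono (h : A ⊆ B) : piece G A v ⊆ piece G B v := fun w hw => by
  obtain ⟨p, hp⟩ := mem_piece.1 hw
  exact mem_piece.2 ⟨p, fun x hx => h (hp x hx)⟩

theorem piece_trans (hw : w ∈ piece G A v) (hu : u ∈ piece G A w) : u ∈ piece G A v := by
  obtain ⟨p, hp⟩ := mem_piece.1 hw
  obtain ⟨q, hq⟩ := mem_piece.1 hu
  refine mem_piece.2 ⟨p.append q, fun x hx => ?_⟩
  rcases (Walk.mem_support_append_iff p q).1 hx with hx | hx
  exacts [hp x hx, hq x hx]

theorem piece_symm (hw : w ∈ piece G A v) : v ∈ piece G A w := by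
  obtain ⟨p, hp⟩ := mem_piece.1 hw
  exact mem_piece.2 ⟨p.reverse, fun x hx => hp x (by simpa using hx)⟩

theorem piece_eq_of_mem (hw : w ∈ piece G A v) : piece G A w = piece G A v :=
  ext fun _ => ⟨piece_trans hw, piece_trans (piece_symm hw)⟩

theorem piece_eq_of_adj (hu : u ∈ A) (hv : v ∈ A) (huv : G.Adj u v) :
    piece G A u = piece G A v :=
  (piece_eq_of_mem (mem_piece.2 ⟨.cons huv .nil, by simp [hu, hv]⟩)).symm

theorem filter_piece_eq [DecidableEq V] : {w ∈ A | piece G A w = piece G A v} = piece G A v := by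
  ext w
  rw [mem_filter]
  exact ⟨fun ⟨hw, h⟩ => h ▸ mem_piece_self hw, fun h => ⟨piece_subset h, piece_eq_of_mem h⟩⟩

theorem card_filter_piece_eq_le [DecidableEq V] {s : ℝ} (hs0 : 0 ≤ s)
    (hs : ∀ v ∈ A, (#(piece G A v) : ℝ) ≤ s) (K : Finset V) :
    (#{v ∈ A | piece G A v = K} : ℝ) ≤ s := by
  rcases eq_empty_or_nonempty {v ∈ A | piece G A v = K} with h | ⟨v, hv⟩
  · simpa [h] using hs0
  · obtain ⟨hvA, rfl⟩ := mem_filter.1 hv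
    rw [filter_piece_eq]
    exact hs v hvA

theorem sum_card_piece [DecidableEq V] : ∑ K ∈ A.image (piece G A), #K = #A := by
  rw [card_eq_sum_card_image (piece G A) A]
  refine sum_congr rfl fun K hK => ?_
  obtain ⟨v, -, rfl⟩ := mem_image.1 hK
  rw [filter_piece_eq]

theorem piece_subset_piece_inter [DecidableEq V] (h : A ⊆ B) :
    piece G A v ⊆ piece G (A ∩ piece G B v) v := by
  intro w hw
  obtain ⟨p, hp⟩ := mem_piece.1 hw
  refine mem_piece.2 ⟨p, fun x hx => mem_inter.2 ⟨hp x hx, mem_piece.2 ⟨p.takeUntil x hx, ?_⟩⟩⟩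
  exact fun y hy => h (hp y (p.support_takeUntil_subset_support hx hy))

theorem piece_subset_piece_sdiff [DecidableEq V] {S X Y : Finset V} (hS : S ⊆ X) (hY : Y ⊆ X) :
    piece G (A \ X) v ⊆ piece G (piece G (A \ S) v \ Y) v := by
  refine (piece_subset_piece_inter (sdiff_subset_sdiff subset_rfl hS)).trans (piece_mono ?_)
  intro w hw
  obtain ⟨hwAX, hwK⟩ := mem_inter.1 hw
  exact mem_sdiff.2 ⟨hwK, fun hwY => (mem_sdiff.1 hwAX).2 (hY hwY)⟩

theorem card_piece_sdiff_union_biUnion_le [DecidableEq V] {S : Finset V} {Y : Finset V → Finset V}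
    {s : ℝ} (hY : ∀ K ∈ (A \ S).image (piece G (A \ S)), ∀ v ∈ K \ Y K,
      (#(piece G (K \ Y K) v) : ℝ) ≤ s) :
    ∀ v ∈ A \ (S ∪ ((A \ S).image (piece G (A \ S))).biUnion Y),
      (#(piece G (A \ (S ∪ ((A \ S).image (piece G (A \ S))).biUnion Y)) v) : ℝ) ≤ s := by
  intro v hv
  obtain ⟨hvA, hvX⟩ := mem_sdiff.1 hv
  have hvB : v ∈ A \ S := mem_sdiff.2 ⟨hvA, fun h => hvX (mem_union_left _ h)⟩
  have hK := mem_image_of_mem (piece G (A \ S)) hvB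
  have hYX := (subset_biUnion_of_mem Y hK).trans (subset_union_right (s₁ := S))
  refine le_trans ?_ (hY _ hK v (mem_sdiff.2 ⟨mem_piece_self hvB, fun h => hvX (hYX h)⟩))
  exact_mod_cast card_le_card (piece_subset_piece_sdiff subset_union_left hYX)

variable {V' : Type*} {G' : SimpleGraph V'}

theorem SimpleGraph.Walk.exists_reachable_of_support_subset_range (e : G' ↪g G) {u w : V}
    (p : G.Walk u w) (hp : ∀ y ∈ p.support, y ∈ Set.range e) {x : V'} (hx : e x = u) :
    ∃ z, e z = w ∧ G'.Reachable x z := by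
  induction p generalizing x with
  | nil => exact ⟨x, hx, .rfl⟩
  | cons h p ih =>
    obtain ⟨y, hy⟩ := hp _ (List.mem_cons_of_mem _ p.start_mem_support)
    obtain ⟨z, hz, hyz⟩ := ih (fun y hy' => hp y (List.mem_cons_of_mem _ hy')) hy
    subst hx hy
    exact ⟨z, hz, (e.map_adj_iff.1 h).reachable.trans hyz⟩

theorem card_piece_le_card_supp [Finite V'] (e : G' ↪g G) (hA : ∀ w ∈ A, w ∈ Set.range e)
    (x : V') : #(piece G A (e x)) ≤ Nat.card (G'.connectedComponentMk x).supp := by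
  have hsub : (piece G A (e x) : Set V) ⊆ e '' (G'.connectedComponentMk x).supp := by
    intro w hw
    obtain ⟨p, hp⟩ := mem_piece.1 hw
    obtain ⟨z, hz, hxz⟩ :=
      p.exists_reachable_of_support_subset_range e (fun y hy => hA y (hp y hy)) rfl
    exact ⟨z, ConnectedComponent.sound hxz.symm, hz⟩
  calc #(piece G A (e x)) = (piece G A (e x) : Set V).ncard := (Set.ncard_coe_finset _).symm
    _ ≤ (e '' (G'.connectedComponentMk x).supp).ncard := Set.ncard_le_ncard hsub (Set.toFinite _)
    _ = Nat.card (G'.connectedComponentMk x).supp := by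
      rw [Set.ncard_image_of_injective _ e.injective, Nat.card_coe_set_eq]

end Pieces

section Budget

noncomputable def sepConst (c ε : ℝ) : ℝ := c * 2 ^ ε / (2 ^ ε - 1)

/-- A bound on the number of vertices whose removal cuts an `N`-vertex graph of the class into
pieces of at most `s` vertices; the subtracted term is the slack that pays for the top-level
separator. -/
noncomputable def cutBudget (c ε s N : ℝ) : ℝ :=
  if N ≤ s then 0 else N * (sepConst c ε * s ^ (-ε) - (sepConst c ε - c) * N ^ (-ε))

variable {c ε : ℝ}

theorem le_sepConst (hc : 0 ≤ c) (hε : 0 < ε) : c ≤ sepConst c ε := by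
  have h := Real.one_lt_rpow one_lt_two hε
  rw [sepConst, le_div_iff₀ (by linarith)]
  nlinarith

theorem sepConst_sub_mul (hε : 0 < ε) : (sepConst c ε - c) * 2 ^ ε = sepConst c ε := by
  have h : (2 : ℝ) ^ ε - 1 ≠ 0 := (sub_pos.2 (Real.one_lt_rpow one_lt_two hε)).ne'
  rw [sepConst]
  field_simp
  ring

theorem cutBudget_le_mul (hcC : c ≤ sepConst c ε) (hε : 0 < ε) {s n M : ℝ} (hs : 0 < s)
    (hn : 0 ≤ n) (hnM : n ≤ M) :
    cutBudget c ε s n ≤ n * max (sepConst c ε * s ^ (-ε) - (sepConst c ε - c) * M ^ (-ε)) 0 := by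
  unfold cutBudget
  split_ifs with hns
  · exact mul_nonneg hn (le_max_right _ _)
  · have hM : M ^ (-ε) ≤ n ^ (-ε) :=
      Real.rpow_le_rpow_of_nonpos (hs.trans (not_le.1 hns)) hnM (by linarith)
    refine mul_le_mul_of_nonneg_left ((sub_le_sub_left ?_ _).trans (le_max_left _ _)) hn
    exact mul_le_mul_of_nonneg_left hM (sub_nonneg.2 hcC)

theorem cutBudget_le (hc : 0 ≤ c) (hcC : c ≤ sepConst c ε) {s N : ℝ} (hs : 0 ≤ s)
    (hN : 0 ≤ N) : cutBudget c ε s N ≤ sepConst c ε * N * s ^ (-ε) := by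
  have hC : 0 ≤ sepConst c ε := hc.trans hcC
  unfold cutBudget
  split_ifs
  · positivity
  · have : 0 ≤ N * ((sepConst c ε - c) * N ^ (-ε)) :=
      mul_nonneg hN (mul_nonneg (sub_nonneg.2 hcC) (Real.rpow_nonneg hN _))
    linarith

theorem add_sum_cutBudget_le (hc : 0 < c) (hε : 0 < ε) {s N : ℝ} (hs : 0 < s) (hsN : s < N)
    {ι : Type*} (t : Finset ι) (n : ι → ℝ) (hn0 : ∀ i ∈ t, 0 ≤ n i)
    (hnN : ∀ i ∈ t, n i ≤ N / 2) (hsum : ∑ i ∈ t, n i ≤ N) :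
    c * N ^ (1 - ε) + ∑ i ∈ t, cutBudget c ε s (n i) ≤ cutBudget c ε s N := by
  set C := sepConst c ε
  have hcC : c ≤ C := le_sepConst hc.le hε
  have hN : 0 < N := hs.trans hsN
  set κ := C * s ^ (-ε) - (C - c) * (N / 2) ^ (-ε)
  have hterms : ∑ i ∈ t, cutBudget c ε s (n i) ≤ N * max κ 0 := calc
    _ ≤ ∑ i ∈ t, n i * max κ 0 :=
      sum_le_sum fun i hi => cutBudget_le_mul hcC hε hs (hn0 i hi) (hnN i hi)
    _ = (∑ i ∈ t, n i) * max κ 0 := (sum_mul ..).symm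
    _ ≤ N * max κ 0 := mul_le_mul_of_nonneg_right hsum (le_max_right _ _)
  have hhalf : (C - c) * (N / 2) ^ (-ε) = C * N ^ (-ε) := by
    rw [Real.div_rpow hN.le zero_le_two, Real.rpow_neg zero_le_two, div_inv_eq_mul]
    linear_combination N ^ (-ε) * sepConst_sub_mul (c := c) hε
  have hmono : C * N ^ (-ε) ≤ C * s ^ (-ε) :=
    mul_le_mul_of_nonneg_left (Real.rpow_le_rpow_of_nonpos hs hsN.le (by linarith))
      (hc.le.trans hcC)
  rw [cutBudget, if_neg hsN.not_ge, sub_eq_add_neg, Real.rpow_add hN, Real.rpow_one]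
  rcases le_total κ 0 with hκ | hκ
  · rw [max_eq_right hκ] at hterms
    nlinarith
  · rw [max_eq_left hκ] at hterms
    nlinarith

end Budget

section Exponent

variable {ε : ℝ} {d : ℕ}

noncomputable def tdExponent (ε : ℝ) (d : ℕ) : ℝ := (1 - ε) / (1 - ε ^ d)

theorem tdExponent_pos (hε0 : 0 < ε) (hε1 : ε < 1) (hd : 0 < d) : 0 < tdExponent ε d :=
  div_pos (sub_pos.2 hε1) (sub_pos.2 (pow_lt_one₀ hε0.le hε1 hd.ne'))

theorem one_sub_mul_tdExponent_div (hε0 : 0 < ε) (hε1 : ε < 1) (hd : 0 < d) :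
    1 - ε * (tdExponent ε (d + 1) / tdExponent ε d) = tdExponent ε (d + 1) := by
  have h1 : 1 - ε ≠ 0 := (sub_pos.2 hε1).ne'
  have hd : 1 - ε ^ d ≠ 0 := (sub_pos.2 (pow_lt_one₀ hε0.le hε1 hd.ne')).ne'
  have hd1 : 1 - ε ^ (d + 1) ≠ 0 := (sub_pos.2 (pow_lt_one₀ hε0.le hε1 d.succ_ne_zero)).ne'
  unfold tdExponent
  field_simp
  ring

theorem rpow_tdExponent_div_rpow {N : ℝ} (hN : 0 ≤ N) (hδ : tdExponent ε d ≠ 0) :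
    (N ^ (tdExponent ε (d + 1) / tdExponent ε d)) ^ tdExponent ε d = N ^ tdExponent ε (d + 1) := by
  rw [← Real.rpow_mul hN, div_mul_cancel₀ _ hδ]

theorem mul_rpow_tdExponent_div_rpow_neg (hε0 : 0 < ε) (hε1 : ε < 1) (hd : 0 < d) {N : ℝ}
    (hN : 0 < N) :
    N * (N ^ (tdExponent ε (d + 1) / tdExponent ε d)) ^ (-ε) = N ^ tdExponent ε (d + 1) := by
  rw [← Real.rpow_mul hN.le]
  conv_rhs => rw [← one_sub_mul_tdExponent_div hε0 hε1 hd, sub_eq_add_neg, Real.rpow_add hN,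
    Real.rpow_one]
  ring_nf

end Exponent

section Separators

variable {V : Type*} [DecidableEq V] {G : SimpleGraph V} {c ε : ℝ}

def HasSeparators (G : SimpleGraph V) (c ε : ℝ) : Prop :=
  ∀ A : Finset V, ∃ S : Finset V, (#S : ℝ) ≤ c * (#A : ℝ) ^ (1 - ε) ∧
    ∀ v ∈ A \ S, (#(piece G (A \ S) v) : ℝ) ≤ #A / 2

theorem HasSeparators.one_le (hG : HasSeparators G c ε) (v : V) : 1 ≤ c := by
  obtain ⟨S, hS, hpieces⟩ := hG {v}
  have hvS : v ∈ S := by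
    by_contra hvS
    have hv : v ∈ ({v} : Finset V) \ S := mem_sdiff.2 ⟨mem_singleton_self v, hvS⟩
    have h1 : (1 : ℝ) ≤ #(piece G ({v} \ S) v) := by
      exact_mod_cast card_pos.2 ⟨v, mem_piece_self hv⟩
    have h2 := hpieces v hv
    norm_num at h2
    linarith
  have : (1 : ℝ) ≤ #S := by exact_mod_cast card_pos.2 ⟨v, hvS⟩
  simpa using this.trans hS

theorem HasSeparators.exists_small_pieces (hG : HasSeparators G c ε) (hc : 0 < c) (hε : 0 < ε)
    {s : ℝ} (hs : 0 < s) (A : Finset V) :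
    ∃ X : Finset V, (∀ v ∈ A \ X, (#(piece G (A \ X) v) : ℝ) ≤ s) ∧
      (#X : ℝ) ≤ cutBudget c ε s #A := by
  induction hn : #A using Nat.strong_induction_on generalizing A with
  | _ n ih =>
  subst hn
  by_cases hAs : (#A : ℝ) ≤ s
  · refine ⟨∅, fun v _ => le_trans ?_ hAs, by simp [cutBudget, hAs]⟩
    exact_mod_cast card_le_card (piece_subset.trans sdiff_subset)
  obtain ⟨S, hS, hpieces⟩ := hG A
  set B := A \ S
  have hhalf : ∀ K ∈ B.image (piece G B), (#K : ℝ) ≤ #A / 2 := by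
    simp only [mem_image]
    rintro K ⟨v, hv, rfl⟩
    exact hpieces v hv
  have hrec : ∀ K ∈ B.image (piece G B), ∃ Y : Finset V,
      (∀ v ∈ K \ Y, (#(piece G (K \ Y) v) : ℝ) ≤ s) ∧ (#Y : ℝ) ≤ cutBudget c ε s #K := by
    intro K hK
    refine ih _ ?_ K rfl
    have := hhalf K hK
    have : (#K : ℝ) < #A := by linarith [hs.trans (not_le.1 hAs)]
    exact_mod_cast this
  choose! Y hYsmall hYcard using hrec
  refine ⟨S ∪ (B.image (piece G B)).biUnion Y, card_piece_sdiff_union_biUnion_le hYsmall, ?_⟩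
  calc (#(S ∪ (B.image (piece G B)).biUnion Y) : ℝ)
      ≤ #S + ∑ K ∈ B.image (piece G B), (#(Y K) : ℝ) := by
        exact_mod_cast (card_union_le _ _).trans (Nat.add_le_add_left card_biUnion_le _)
    _ ≤ c * (#A : ℝ) ^ (1 - ε) + ∑ K ∈ B.image (piece G B), cutBudget c ε s #K :=
        add_le_add hS (sum_le_sum hYcard)
    _ ≤ cutBudget c ε s #A := by
        refine add_sum_cutBudget_le hc hε hs (not_le.1 hAs) _ _ (fun _ _ => by positivity)
          hhalf ?_
        exact_mod_cast sum_card_piece.trans_le (card_le_card sdiff_subset)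

end Separators

theorem hasSeparators_of_sepBound {𝒢 : ∀ V : Type, SimpleGraph V → Prop} (hher : Hereditary 𝒢)
    {c ε : ℝ} (hsep : SepBound 𝒢 c ε) {V : Type} [DecidableEq V] {G : SimpleGraph V}
    (hG : 𝒢 V G) : HasSeparators G c ε := by
  intro A
  obtain ⟨S, hScard, hScomps⟩ := hsep _ (G.induce (A : Set V)) (hher V G hG A)
  refine ⟨S.map (Function.Embedding.subtype _), by simpa using hScard, fun v hv => ?_⟩
  obtain ⟨hvA, hvS⟩ := mem_sdiff.1 hv
  have hx : (⟨v, hvA⟩ : (A : Set V)) ∉ (S : Set (A : Set V)) :=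
    fun h => hvS (mem_map_of_mem _ h)
  let e : (G.induce (A : Set V)).induce (S : Set (A : Set V))ᶜ ↪g G :=
    (Embedding.induce _).trans (Embedding.induce _)
  have hrange : ∀ w ∈ A \ S.map (Function.Embedding.subtype _), w ∈ Set.range e := by
    intro w hw
    obtain ⟨hwA, hwS⟩ := mem_sdiff.1 hw
    exact ⟨⟨⟨w, hwA⟩, fun h => hwS (mem_map_of_mem _ h)⟩, rfl⟩
  have := card_piece_le_card_supp e hrange ⟨⟨v, hvA⟩, hx⟩
  calc (#(piece G (A \ S.map (Function.Embedding.subtype _)) v) : ℝ)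
      ≤ Nat.card (((G.induce (A : Set V)).induce (S : Set (A : Set V))ᶜ).connectedComponentMk
          ⟨⟨v, hvA⟩, hx⟩).supp := by exact_mod_cast this
    _ ≤ #A / 2 := by simpa using hScomps _

section Partition

variable {V : Type*} {G : SimpleGraph V}

open Classical in
/-- The fibres of `P` on `A` form an `H`-partition of `G[A]` with `td H ≤ d` and parts of at most
`m` vertices. -/
def HasTdPartition (G : SimpleGraph V) (A : Finset V) (d : ℕ) (m : ℝ) : Prop :=
  ∃ (W : Type) (H : SimpleGraph W) (P : V → W), tdLE H d ∧
    (∀ u ∈ A, ∀ v ∈ A, G.Adj u v → P u = P v ∨ H.Adj (P u) (P v)) ∧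
    ∀ w, (#{v ∈ A | P v = w} : ℝ) ≤ m

variable {A X : Finset V} {d : ℕ} {m : ℝ}

theorem HasTdPartition.mono {m' : ℝ} (h : HasTdPartition G A d m) (hm : m ≤ m') :
    HasTdPartition G A d m' :=
  let ⟨W, H, P, htd, hP, hfib⟩ := h
  ⟨W, H, P, htd, hP, fun w => (hfib w).trans hm⟩

theorem hasTdPartition_card (G : SimpleGraph V) (A : Finset V) (hd : 0 < d) :
    HasTdPartition G A d #A :=
  ⟨PUnit, ⊥, fun _ => PUnit.unit, tdLE_bot hd, fun _ _ _ _ _ => Or.inl rfl, fun _ =>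
    Nat.cast_le.2 (card_le_card fun _ hv => by simp only [mem_filter] at hv; exact hv.1)⟩

theorem HasTdPartition.of_blocks {ι : Type} [DecidableEq ι] (β : V → ι)
    (hβ : ∀ u ∈ A, ∀ v ∈ A, G.Adj u v → β u = β v)
    (h : ∀ i, HasTdPartition G {v ∈ A | β v = i} d m) : HasTdPartition G A d m := by
  choose W H P htd hP hfib using h
  refine ⟨Σ i, W i, sigmaGraph H, fun v => ⟨β v, P (β v) v⟩, tdLE_sigmaGraph htd, ?_, ?_⟩
  · intro u hu v hv huv
    have hβv : β v = β u := (hβ u hu v hv huv).symm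
    have hmem : ∀ x ∈ A, β x = β u → x ∈ {x ∈ A | β x = β u} :=
      fun x hx h => mem_filter.2 ⟨hx, h⟩
    dsimp only
    rw [hβv]
    exact (hP (β u) u (hmem u hu rfl) v (hmem v hv hβv) huv).imp (congrArg _)
      sigmaGraph_adj_mk.2
  · rintro ⟨i, w⟩
    refine le_trans ?_ (hfib i w)
    refine Nat.cast_le.2 (card_le_card fun v hv => ?_)
    simp only [mem_filter, Sigma.mk.inj_iff] at hv ⊢
    obtain ⟨hvA, rfl, hw⟩ := hv
    exact ⟨⟨hvA, rfl⟩, eq_of_heq hw⟩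

theorem HasTdPartition.of_sdiff [DecidableEq V] (hX : (#X : ℝ) ≤ m)
    (h : HasTdPartition G (A \ X) d m) : HasTdPartition G A (d + 1) m := by
  obtain ⟨W, H, P, htd, hP, hfib⟩ := h
  refine ⟨Option W, coneGraph H, fun v => if v ∈ X then none else some (P v), tdLE_coneGraph htd,
    ?_, ?_⟩
  · intro u hu v hv huv
    dsimp only
    by_cases huX : u ∈ X <;> by_cases hvX : v ∈ X <;> simp only [huX, hvX, if_true, if_false]
    · exact Or.inl trivial
    · exact Or.inr (coneGraph_adj_none_some _)
    · exact Or.inr (coneGraph_adj_none_some _).symm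
    · exact (hP u (mem_sdiff.2 ⟨hu, huX⟩) v (mem_sdiff.2 ⟨hv, hvX⟩) huv).imp (congrArg some)
        coneGraph_adj_some.2
  · rintro (_ | w)
    · refine le_trans (Nat.cast_le.2 (card_le_card fun v hv => ?_)) hX
      simp only [mem_filter, ite_eq_left_iff, reduceCtorEq, imp_false, not_not] at hv
      exact hv.2
    · refine le_trans (Nat.cast_le.2 (card_le_card fun v hv => ?_)) (hfib w)
      simp only [mem_filter, Option.ite_none_left_eq_some, mem_sdiff] at hv ⊢
      exact ⟨⟨hv.1, hv.2.1⟩, Option.some_inj.1 hv.2.2⟩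

theorem containedIn_strongProd_top {U W : Type*} [Fintype U] [DecidableEq W]
    {G : SimpleGraph U} {H : SimpleGraph W} (P : U → W) {m : ℕ}
    (hP : ∀ ⦃u v⦄, G.Adj u v → P u = P v ∨ H.Adj (P u) (P v))
    (hfib : ∀ w, #{v | P v = w} ≤ m) :
    ContainedIn G (StrongProd H (⊤ : SimpleGraph (Fin m))) := by
  have e : ∀ w, {v // P v = w} ↪ Fin m := fun w =>
    (Function.Embedding.nonempty_iff_card_le.2 (by simpa [Fintype.card_subtype] using hfib w)).some
  have hinj : Function.Injective fun v => (P v, e (P v) ⟨v, rfl⟩) := by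
    intro u v huv
    have key : ∀ a b (ha : P u = a) (hb : P v = b),
        a = b → e a ⟨u, ha⟩ = e b ⟨v, hb⟩ → u = v := by
      rintro a b ha hb rfl h
      exact congrArg Subtype.val ((e a).injective h)
    exact key _ _ rfl rfl (Prod.ext_iff.1 huv).1 (Prod.ext_iff.1 huv).2
  refine ⟨_, hinj, fun u v huv => ⟨hinj.ne huv.ne, hP huv, ?_⟩⟩
  exact (eq_or_ne _ _).imp_right fun h => (top_adj _ _).2 h

theorem HasTdPartition.exists_containedIn [Fintype V] (h : HasTdPartition G univ d m) :
    ∃ (W : Type) (H : SimpleGraph W),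
      tdLE H d ∧ ContainedIn G (StrongProd H (⊤ : SimpleGraph (Fin ⌊m⌋₊))) := by
  classical
  obtain ⟨W, H, P, htd, hP, hfib⟩ := h
  exact ⟨W, H, htd, containedIn_strongProd_top P
    (fun u v huv => hP u (mem_univ u) v (mem_univ v) huv) fun w => Nat.le_floor (hfib w)⟩

end Partition

section Induction

variable {V : Type} [DecidableEq V] {G : SimpleGraph V} {c ε : ℝ}

theorem HasSeparators.hasTdPartition (hG : HasSeparators G c ε) (hc : 0 < c) (hε0 : 0 < ε)
    (hε1 : ε < 1) {d : ℕ} (hd : 0 < d) (A : Finset V) :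
    HasTdPartition G A d (sepConst c ε * (#A : ℝ) ^ tdExponent ε d) := by
  have hcC := le_sepConst hc.le hε0
  induction d, hd using Nat.le_induction generalizing A with
  | base =>
    refine (hasTdPartition_card G A one_pos).mono ?_
    rw [tdExponent, pow_one, div_self (sub_pos.2 hε1).ne', Real.rpow_one]
    rcases A.eq_empty_or_nonempty with rfl | ⟨v, -⟩
    · simp
    · exact le_mul_of_one_le_left (by positivity) ((hG.one_le v).trans hcC)
  | succ d hd ih =>
    rcases A.eq_empty_or_nonempty with rfl | hA
    · exact (hasTdPartition_card G ∅ d.succ_pos).mono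
        (by simpa using mul_nonneg (hc.le.trans hcC) (Real.rpow_nonneg le_rfl _))
    have hN : (0 : ℝ) < #A := by exact_mod_cast hA.card_pos
    have hs := Real.rpow_pos_of_pos hN (tdExponent ε (d + 1) / tdExponent ε d)
    obtain ⟨X, hXsmall, hXcard⟩ := hG.exists_small_pieces hc hε0 hs A
    refine .of_sdiff ?_ (.of_blocks (piece G (A \ X)) (fun u hu v hv => piece_eq_of_adj hu hv)
      fun K => (ih _).mono ?_)
    · calc (#X : ℝ)
          ≤ sepConst c ε * #A * (#A ^ (tdExponent ε (d + 1) / tdExponent ε d)) ^ (-ε) :=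
            hXcard.trans (cutBudget_le hc.le hcC hs.le hN.le)
        _ = sepConst c ε * (#A : ℝ) ^ tdExponent ε (d + 1) := by
            rw [mul_assoc, mul_rpow_tdExponent_div_rpow_neg hε0 hε1 hd hN]
    · rw [← rpow_tdExponent_div_rpow hN.le (tdExponent_pos hε0 hε1 hd).ne']
      exact mul_le_mul_of_nonneg_left (Real.rpow_le_rpow (by positivity)
        (card_filter_piece_eq_le hs.le hXsmall K) (tdExponent_pos hε0 hε1 hd).le)
        (hc.le.trans hcC)

end Induction

theorem sublinear_separator_treedepth_product
    (𝒢 : ∀ V : Type, SimpleGraph V → Prop) (hher : Hereditary 𝒢)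
    (c ε : ℝ) (hc : 0 < c) (hε0 : 0 < ε) (hε1 : ε < 1)
    (hsep : SepBound 𝒢 c ε) (d : ℕ) (hd : 0 < d)
    (V : Type) [Fintype V] (G : SimpleGraph V) (hG : 𝒢 V G) :
    ∃ (W : Type) (H : SimpleGraph W) (m : ℕ),
      tdLE H d ∧
      (m : ℝ) ≤ c * 2 ^ ε / (2 ^ ε - 1) *
        (Fintype.card V : ℝ) ^ ((1 - ε) / (1 - ε ^ d)) ∧
      ContainedIn G (StrongProd H (⊤ : SimpleGraph (Fin m))) := by
  classical
  have hC : 0 ≤ sepConst c ε := hc.le.trans (le_sepConst hc.le hε0)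
  have hpart := (hasSeparators_of_sepBound hher hsep hG).hasTdPartition hc hε0 hε1 hd univ
  obtain ⟨W, H, htd, hGH⟩ := hpart.exists_containedIn
  exact ⟨W, H, _, htd, Nat.floor_le (mul_nonneg hC (Real.rpow_nonneg (Nat.cast_nonneg _) _)),
    hGH⟩
end

section
/- For every path P and positive integers c, n, the graph G = P ⊠ K_c is (n, √(cn))-separable: for every assignment of non-negative real weights to V(G) with total weight n, there is a vertex set S of total weight at most √(cn) such that each connected component of G − S has at most √(cn) vertices. -/
open SimpleGraph

/-!
Take `m = ⌊√(n / c)⌋ + 1`. The `m` residue classes mod `m` of the path coordinate split the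
total weight `n`, so deleting the columns `{i} × K_c` of a suitable class `r` costs at most
`n / m ≤ √(c n)`. What remains falls apart into runs of at most `m - 1` consecutive columns,
so every component has at most `(m - 1) c ≤ √(c n)` vertices.
-/

open Finset

theorem SimpleGraph.Reachable.apply_eq {V α : Type*} {G : SimpleGraph V} {f : V → α}
    (hf : ∀ ⦃u v⦄, G.Adj u v → f u = f v) {u v : V} (h : G.Reachable u v) : f u = f v := by
  rw [reachable_iff_reflTransGen] at h
  simpa only [Relation.reflTransGen_eq_self] using h.lift f hf

theorem Nat.mod_eq_iff_dvd_add_sub {i m r : ℕ} (hr : r < m) :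
    i % m = r ↔ m ∣ i + (m - r) := by
  have hmod : r + (m - r) ≡ 0 [MOD m] := by
    rw [Nat.add_sub_cancel' hr.le]; exact Nat.mod_self m
  have hmodEq : i % m = r ↔ i ≡ r [MOD m] := by rw [Nat.ModEq, Nat.mod_eq_of_lt hr]
  rw [hmodEq, ← Nat.modEq_zero_iff_dvd]
  exact ⟨fun h => (Nat.ModEq.add_right _ h).trans hmod,
    fun h => (h.trans hmod.symm).add_right_cancel' _⟩

theorem Nat.mod_lt_sub_one_of_not_dvd {a m : ℕ} (hm : 0 < m) (h : ¬m ∣ a + 1) :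
    a % m < m - 1 := by
  refine lt_of_le_of_ne (Nat.le_sub_one_of_lt (Nat.mod_lt a hm)) fun hlast => h ?_
  refine ⟨a / m + 1, ?_⟩
  have hdiv := Nat.div_add_mod a m
  rw [hlast] at hdiv
  rw [mul_add, mul_one]
  omega

theorem div_floor_sqrt_div_add_one_le {x c : ℝ} (hx : 0 ≤ x) (hc : 0 < c) :
    x / (⌊√(x / c)⌋₊ + 1) ≤ √(c * x) := by
  have hx_eq : x = √(x / c) * √(c * x) := by
    rw [← Real.sqrt_mul (div_nonneg hx hc.le), show x / c * (c * x) = x * x by field_simp,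
      Real.sqrt_mul_self hx]
  rw [div_le_iff₀ (by positivity)]
  calc x = √(x / c) * √(c * x) := hx_eq
    _ ≤ (⌊√(x / c)⌋₊ + 1) * √(c * x) := by gcongr; exact (Nat.lt_floor_add_one _).le
    _ = _ := mul_comm _ _

theorem floor_sqrt_div_mul_le {x c : ℝ} (hc : 0 < c) : ⌊√(x / c)⌋₊ * c ≤ √(c * x) :=
  calc ⌊√(x / c)⌋₊ * c ≤ √(x / c) * √(c ^ 2) := by
        rw [Real.sqrt_sq hc.le]; gcongr; exact Nat.floor_le (Real.sqrt_nonneg _)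
    _ = √(c * x) := by
        rw [← Real.sqrt_mul' _ (sq_nonneg c)]; congr 1; field_simp

theorem exists_lt_sum_mod_eq_le {V K : Type*} [Fintype V] [Field K] [LinearOrder K]
    [IsStrictOrderedRing K] (w : V → K) (f : V → ℕ) {m : ℕ} (hm : 0 < m) :
    ∃ r < m, ∑ v with f v % m = r, w v ≤ (∑ v, w v) / m := by
  obtain ⟨r, hr, hsum⟩ := exists_sum_fiber_le_of_maps_to_of_sum_le_nsmul
    (fun v _ => mem_range.2 (Nat.mod_lt (f v) hm)) (nonempty_range_iff.2 hm.ne')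
    (w := w) (b := (∑ v, w v) / m)
    (by rw [card_range, nsmul_eq_mul, mul_div_cancel₀ _ (by positivity)])
  exact ⟨r, mem_range.1 hr, hsum⟩

theorem CompsLE.compsLER {V : Type*} {G : SimpleGraph V} {S : Set V} {q : ℕ} {x : ℝ}
    (h : CompsLE G S q) (hq : (q : ℝ) ≤ x) : CompsLER G S x :=
  fun C => (Nat.cast_le.2 (h C)).trans hq

section StrongProdPathGraph

variable {W : Type*} {H : SimpleGraph W} {t m r : ℕ}

/-- `(i + (m - 1 - r)) / m` numbers blocks of `m` consecutive columns, each ending with a column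
`i ≡ r [MOD m]`; only such a column separates its block from the next. -/
theorem div_eq_of_strongProd_pathGraph_adj (hr : r < m) {u v : Fin t × W}
    (hu : u.1.val % m ≠ r) (hv : v.1.val % m ≠ r) (huv : (StrongProd (pathGraph t) H).Adj u v) :
    (u.1.val + (m - 1 - r)) / m = (v.1.val + (m - 1 - r)) / m := by
  have step : ∀ i : ℕ, i % m ≠ r → (i + 1 + (m - 1 - r)) / m = (i + (m - 1 - r)) / m := by
    intro i hi
    rw [show i + 1 + (m - 1 - r) = i + (m - 1 - r) + 1 by omega]
    refine Nat.succ_div_of_not_dvd ?_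
    rwa [show i + (m - 1 - r) + 1 = i + (m - r) by omega, ← Nat.mod_eq_iff_dvd_add_sub hr]
  rcases huv.2.1 with h | h
  · rw [h]
  · rcases pathGraph_adj.1 h with h | h
    · rw [← h, step _ hu]
    · rw [← h, step _ hv]

theorem compsLE_strongProd_pathGraph [Fintype W] (hr : r < m) :
    CompsLE (StrongProd (pathGraph t) H) {v | v.1.val % m = r} ((m - 1) * Fintype.card W) := by
  intro C
  set s := m - 1 - r
  have hpos : ∀ v : C.supp, (v.1.1.1.val + s) % m < m - 1 := fun v =>
    Nat.mod_lt_sub_one_of_not_dvd (by omega) <| by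
      rw [show v.1.1.1.val + s + 1 = v.1.1.1.val + (m - r) by omega,
        ← Nat.mod_eq_iff_dvd_add_sub hr]
      exact v.1.2
  have hadj : ∀ ⦃a b : ({v : Fin t × W | v.1.val % m = r}ᶜ : Set (Fin t × W))⦄,
      ((StrongProd (pathGraph t) H).induce _).Adj a b →
        (a.1.1.val + s) / m = (b.1.1.val + s) / m :=
    fun a b hab => div_eq_of_strongProd_pathGraph_adj hr a.2 b.2 hab
  have hblock : ∀ v w : C.supp, (v.1.1.1.val + s) / m = (w.1.1.1.val + s) / m := fun v w =>
    (C.reachable_of_mem_supp v.2 w.2).apply_eq hadj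
  calc Nat.card C.supp ≤ Nat.card (Fin (m - 1) × W) :=
        Nat.card_le_card_of_injective (fun v => (⟨_, hpos v⟩, v.1.1.2)) fun v w hvw => by
          simp only [Prod.mk.injEq, Fin.mk.injEq] at hvw
          have hcol : v.1.1.1.val + s = w.1.1.1.val + s := by
            rw [← Nat.div_add_mod (v.1.1.1.val + s) m, ← Nat.div_add_mod (w.1.1.1.val + s) m,
              hblock v w, hvw.1]
          exact Subtype.ext <| Subtype.ext <| Prod.ext (Fin.ext (by omega)) hvw.2
    _ = (m - 1) * Fintype.card W := by simp

end StrongProdPathGraph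

theorem pathProdComplete_separable_general (t c n : ℕ) (hc : 0 < c)
    (w : Fin t × Fin c → ℝ) (hwsum : ∑ v, w v = n) :
    ∃ S : Finset (Fin t × Fin c),
      (∑ v ∈ S, w v) ≤ Real.sqrt (c * n) ∧
      CompsLER (StrongProd (SimpleGraph.pathGraph t) (⊤ : SimpleGraph (Fin c)))
        (↑S) (Real.sqrt (c * n)) := by
  have hcR : (0 : ℝ) < c := Nat.cast_pos.2 hc
  set g := ⌊√((n : ℝ) / c)⌋₊
  obtain ⟨r, hr, hwr⟩ := exists_lt_sum_mod_eq_le w (fun v => v.1.val) g.succ_pos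
  refine ⟨({v : Fin t × Fin c | v.1.val % (g + 1) = r} : Finset _), ?_, ?_⟩
  · rw [hwsum, Nat.cast_succ] at hwr
    exact hwr.trans (div_floor_sqrt_div_add_one_le n.cast_nonneg hcR)
  · rw [coe_filter_univ]
    refine (compsLE_strongProd_pathGraph hr).compsLER ?_
    simpa only [Nat.succ_sub_one, Fintype.card_fin, Nat.cast_mul] using
      floor_sqrt_div_mul_le (x := n) hcR

theorem pathProdComplete_separable (t c n : ℕ) (hc : 0 < c) (hn : 0 < n)
    (w : Fin t × Fin c → ℝ) (hw0 : ∀ v, 0 ≤ w v) (hwsum : ∑ v, w v = n) :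
    ∃ S : Finset (Fin t × Fin c),
      (∑ v ∈ S, w v) ≤ Real.sqrt (c * n) ∧
      CompsLER (StrongProd (SimpleGraph.pathGraph t) (⊤ : SimpleGraph (Fin c)))
        (↑S) (Real.sqrt (c * n)) :=
  pathProdComplete_separable_general t c n hc w hwsum
end

section
/- Let S be a set of p vertices in the k-th power P_n^k of the n-vertex path such that every connected component of P_n^k − S has at most q vertices. Then k·n ≤ p·q + k·(p + q). -/
open SimpleGraph

/-!
Remove `S` from `P_n^k`. A vertex outside `S` that is the leftmost vertex of its component has
its `k` predecessors in `S` (they would be adjacent to it), so every component contains such a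
"left end". Two left ends are more than `k` apart, hence the windows of `k` integers just below
them are disjoint; they lie in `S ∪ [-k, 0)`, so `k · m ≤ p + k` for the number `m` of
components. Combined with `n - p ≤ m · q` this gives
`k n ≤ k p + k m q ≤ k p + (p + k) q`.
-/

open Finset

lemma SimpleGraph.card_le_card_connectedComponent_mul {V : Type*} [Finite V] (G : SimpleGraph V)
    {q : ℕ} (h : ∀ c : G.ConnectedComponent, Nat.card c.supp ≤ q) :
    Nat.card V ≤ Nat.card G.ConnectedComponent * q := by
  classical
  have := Fintype.ofFinite G.ConnectedComponent
  calc Nat.card V = Nat.card (Σ c : G.ConnectedComponent, c.supp) :=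
        Nat.card_congr (Equiv.sigmaFiberEquiv G.connectedComponentMk).symm
    _ = ∑ c, Nat.card c.supp := Nat.card_sigma
    _ ≤ ∑ _c : G.ConnectedComponent, q := sum_le_sum fun c _ => h c
    _ = Nat.card G.ConnectedComponent * q := by simp [Nat.card_eq_fintype_card]

lemma mul_card_le_card_of_Ico_subset {k : ℕ} {L T : Finset ℤ}
    (hsep : ∀ v ∈ L, ∀ w ∈ L, v < w → v + k ≤ w) (hT : ∀ v ∈ L, Ico (v - k) v ⊆ T) :
    k * #L ≤ #T := by
  have hdisj : (L : Set ℤ).PairwiseDisjoint fun v => Ico (v - k) v := by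
    intro v hv w hw hvw
    rw [Function.onFun, Finset.disjoint_left]
    intro x hxv hxw
    rw [mem_Ico] at hxv hxw
    rcases hvw.lt_or_gt with h | h
    · have := hsep v hv w hw h; omega
    · have := hsep w hw v hv h; omega
  calc k * #L = #(L.biUnion fun v => Ico (v - k) v) := by
        rw [card_biUnion hdisj, sum_const_nat (m := k) fun v _ => by simp, mul_comm]
    _ ≤ #T := card_le_card (biUnion_subset.mpr hT)

namespace pathPow

variable {n k : ℕ}

lemma adj_of_lt {u v : Fin n} (huv : u < v) (hvu : (v : ℕ) ≤ u + k) : (pathPow n k).Adj u v :=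
  ⟨huv.ne, by omega, by omega⟩

def leftEnds (k : ℕ) (S : Finset (Fin n)) : Finset (Fin n) :=
  {v | v ∉ S ∧ ∀ u : Fin n, u < v → (v : ℕ) ≤ u + k → u ∈ S}

variable {S : Finset (Fin n)}

lemma add_lt_of_mem_leftEnds {v w : Fin n} (hv : v ∈ leftEnds k S) (hw : w ∈ leftEnds k S)
    (hvw : v < w) : (v : ℕ) + k < w := by
  simp only [leftEnds, mem_filter_univ] at hv hw
  by_contra! h
  exact hv.1 (hw.2 v hvw h)

lemma Ico_subset_of_mem_leftEnds {v : Fin n} (hv : v ∈ leftEnds k S) :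
    Ico ((v : ℤ) - k) v ⊆ S.image (fun u : Fin n => ((u : ℕ) : ℤ)) ∪ Ico (-k : ℤ) 0 := by
  intro x hx
  rw [mem_Ico] at hx
  rw [mem_union, mem_image, mem_Ico]
  rcases lt_or_ge x 0 with hneg | hnonneg
  · right; omega
  · left
    refine ⟨⟨x.toNat, by omega⟩, ((mem_filter_univ _).mp hv).2 _ ?_ ?_, Int.toNat_of_nonneg hnonneg⟩
    · show x.toNat < (v : ℕ); omega
    · show (v : ℕ) ≤ x.toNat + k; omega

lemma mul_card_leftEnds_le : k * #(leftEnds k S) ≤ #S + k := by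
  have hcard : #((leftEnds k S).image fun v : Fin n => ((v : ℕ) : ℤ)) = #(leftEnds k S) :=
    card_image_of_injective _ fun a b h => Fin.ext (by exact_mod_cast h)
  calc k * #(leftEnds k S) = k * #((leftEnds k S).image fun v : Fin n => ((v : ℕ) : ℤ)) := by
        rw [hcard]
    _ ≤ #(S.image (fun v : Fin n => ((v : ℕ) : ℤ)) ∪ Ico (-k : ℤ) 0) := by
      apply mul_card_le_card_of_Ico_subset
      · simp only [mem_image]
        rintro _ ⟨v, hv, rfl⟩ _ ⟨w, hw, rfl⟩ hvw
        have := add_lt_of_mem_leftEnds hv hw (by exact_mod_cast hvw)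
        omega
      · simp only [mem_image]
        rintro _ ⟨v, hv, rfl⟩
        exact Ico_subset_of_mem_leftEnds hv
    _ ≤ #S + k := (card_union_le _ _).trans (add_le_add card_image_le (by simp))

lemma exists_mem_leftEnds_mem_supp
    (c : ((pathPow n k).induce (S : Set (Fin n))ᶜ).ConnectedComponent) :
    ∃ v, v.1 ∈ leftEnds k S ∧ v ∈ c.supp := by
  classical
  obtain ⟨v, hv, hmin⟩ := c.supp.toFinset.exists_min_image (fun v => v.1)
    (by simpa using c.nonempty_supp)
  rw [Set.mem_toFinset] at hv
  refine ⟨v, (mem_filter_univ _).mpr ⟨v.2, fun u huv hvu => ?_⟩, hv⟩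
  by_contra hu
  have hadj : ((pathPow n k).induce (S : Set (Fin n))ᶜ).Adj ⟨u, hu⟩ v := adj_of_lt huv hvu
  exact (hmin ⟨u, hu⟩ (Set.mem_toFinset.mpr ((c.mem_supp_congr_adj hadj).mpr hv))).not_gt huv

lemma card_connectedComponent_le_card_leftEnds :
    Nat.card ((pathPow n k).induce (S : Set (Fin n))ᶜ).ConnectedComponent ≤ #(leftEnds k S) := by
  calc _ ≤ Nat.card (leftEnds k S) := by
        refine Nat.card_le_card_of_surjective
          (fun v => connectedComponentMk _ ⟨v.1, ((mem_filter_univ _).mp v.2).1⟩) fun c => ?_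
        obtain ⟨v, hv, hc⟩ := exists_mem_leftEnds_mem_supp c
        exact ⟨⟨v.1, hv⟩, hc⟩
    _ = #(leftEnds k S) := Nat.card_eq_finsetCard _

end pathPow

theorem pathPow_separator_lower_bound_general (n k p q : ℕ)
    (S : Finset (Fin n)) (hScard : S.card = p)
    (hcomp : CompsLE (pathPow n k) (↑S) q) :
    k * n ≤ p * q + k * (p + q) := by
  set m := Nat.card ((pathPow n k).induce (S : Set (Fin n))ᶜ).ConnectedComponent
  have hcompl : Nat.card ((S : Set (Fin n))ᶜ : Set (Fin n)) = n - p := by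
    rw [← coe_compl, Nat.card_coe_set_eq, Set.ncard_coe_finset, card_compl, Fintype.card_fin,
      hScard]
  have hsize : n - p ≤ m * q := hcompl ▸ card_le_card_connectedComponent_mul _ hcomp
  have hm : k * m ≤ p + k := hScard ▸ (Nat.mul_le_mul_left k
    pathPow.card_connectedComponent_le_card_leftEnds).trans pathPow.mul_card_leftEnds_le
  calc k * n ≤ k * p + (k * m) * q := by
        rw [mul_assoc, ← mul_add]; exact Nat.mul_le_mul_left k (by omega)
    _ ≤ k * p + (p + k) * q := by gcongr
    _ = p * q + k * (p + q) := by ring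

theorem pathPow_separator_lower_bound (n k p q : ℕ) (hn : 0 < n) (hk : 0 < k)
    (hp : 0 < p) (hq : 0 < q)
    (S : Finset (Fin n)) (hScard : S.card = p)
    (hcomp : CompsLE (pathPow n k) (↑S) q) :
    k * n ≤ p * q + k * (p + q) :=
  pathPow_separator_lower_bound_general n k p q S hScard hcomp
end
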